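/- arXiv:1202.3198 — 11 statements merged into one kernel-verified Lean document; each statement's English description precedes it below -/
import Mathlib

section
/- Let r be a positive integer and let Z be a Gaussian integer such that gcd(gcd(Z.re, Z.im), r) = 1 and r^2 divides the norm of Z (where the norm of x + iy is x^2 + y^2). Let X = gcd(Z, r) computed in the Euclidean domain ℤ[i]. Then: (i) the norm of X equals r; (ii) there exists Z' ∈ ℤ[i] with (star X)^2 * Z = r^2 * Z'; and (iii) for every Q ∈ ℤ[i] such that r^2 divides the norm of (r·Q − Z), there exists Q' ∈ ℤ[i] with (star X)^2 * Q = r * Q'. -/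
/-! A common divisor of `X = gcd Z r` and `star X` divides `Z`, `star Z` and `r`, hence
`2 Z.re`, `2 Z.im` and `r`, hence `1`: `r` is odd, since for even `r` the congruence
`Z.re ^ 2 + Z.im ^ 2 ≡ 0 [ZMOD 4]` would make `2` a common factor of `Z.re`, `Z.im`, `r`.
So `N X = X * star X` divides `r`, while Bézout `X = A Z + B r` gives `r ∣ N X`.
If `w ≡ Z` modulo `r` and `r ^ 2 ∣ N w`, then `X` is coprime to `star w ≡ star Z`, so
`X ^ 2 ∣ (X * star X) ^ 2 ∣ w * star w` forces `X ^ 2 ∣ w`. Taking `w = Z` and `w = Z - r Q`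
gives `X ^ 2 ∣ Z` and `X ^ 2 ∣ r Q`; multiplying by `star X ^ 2` and using `X * star X = r`
yields (ii) and (iii). -/

open EuclideanDomain

theorem star_dvd_star {R : Type*} [CommMonoid R] [StarMul R] {a b : R} (h : a ∣ b) :
    star a ∣ star b := by
  obtain ⟨c, rfl⟩ := h
  exact ⟨star c, by rw [star_mul, mul_comm]⟩

theorem Int.dvd_intCast_gcd {R : Type*} [CommRing R] {g : R} {a b : ℤ} (ha : g ∣ (a : R))
    (hb : g ∣ (b : R)) : g ∣ ((Int.gcd a b : ℤ) : R) := by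
  rw [Int.gcd_eq_gcd_ab]
  push_cast
  exact dvd_add (ha.mul_right _) (hb.mul_right _)

theorem Int.two_dvd_of_four_dvd_sq_add_sq {a b : ℤ} (h : 4 ∣ a ^ 2 + b ^ 2) :
    2 ∣ a ∧ 2 ∣ b := by
  have hsq : ∀ x : ℤ, 2 ∣ x ∧ x ^ 2 % 4 = 0 ∨ x ^ 2 % 4 = 1 := by
    intro x
    rcases Int.even_or_odd x with hx | hx
    · exact Or.inl ⟨hx.two_dvd, Int.emod_eq_zero_of_dvd
        (by simpa [pow_two] using mul_dvd_mul hx.two_dvd hx.two_dvd)⟩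
    · exact Or.inr (Int.sq_mod_four_eq_one_of_odd hx)
  rcases hsq a with ha | ha <;> rcases hsq b with hb | hb <;> omega

theorem Int.gcd_gcd_two_mul_eq_one {a b r : ℤ} (h : Int.gcd (Int.gcd a b) r = 1)
    (hsq : r ^ 2 ∣ a ^ 2 + b ^ 2) : Int.gcd (Int.gcd (2 * a) (2 * b)) r = 1 := by
  have hodd : ¬ 2 ∣ r := fun h2 => by
    obtain ⟨ha, hb⟩ := two_dvd_of_four_dvd_sq_add_sq ((pow_dvd_pow_of_dvd h2 2).trans hsq)
    have := Int.dvd_coe_gcd (Int.dvd_coe_gcd ha hb) h2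
    rw [h] at this
    norm_num at this
  rw [← Int.isCoprime_iff_gcd_eq_one] at h ⊢
  rw [Int.gcd_mul_left]
  push_cast
  exact (Int.prime_two.coprime_iff_not_dvd.2 hodd).mul_left h

namespace GaussianInt

theorem intCast_two_mul_re (z : GaussianInt) : ((2 * z.re : ℤ) : GaussianInt) = z + star z := by
  ext <;> simp [two_mul]

theorem intCast_two_mul_im (z : GaussianInt) :
    ((2 * z.im : ℤ) : GaussianInt) = (star z - z) * Zsqrtd.sqrtd := by
  ext <;> simp [two_mul]

variable {r : ℤ} {z : GaussianInt}

theorem isUnit_of_dvd_of_dvd_star {g : GaussianInt}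
    (h : Int.gcd (Int.gcd (2 * z.re) (2 * z.im)) r = 1) (hz : g ∣ z) (hz' : g ∣ star z)
    (hr : g ∣ (r : GaussianInt)) : IsUnit g := by
  have hre : g ∣ ((2 * z.re : ℤ) : GaussianInt) := intCast_two_mul_re z ▸ dvd_add hz hz'
  have him : g ∣ ((2 * z.im : ℤ) : GaussianInt) :=
    intCast_two_mul_im z ▸ (dvd_sub hz' hz).mul_right _
  have h1 := Int.dvd_intCast_gcd (Int.dvd_intCast_gcd hre him) hr
  rw [h] at h1
  exact isUnit_of_dvd_one (by simpa using h1)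

theorem isRelPrime_gcd_star_gcd (h : Int.gcd (Int.gcd (2 * z.re) (2 * z.im)) r = 1) :
    IsRelPrime (gcd z r) (star (gcd z r)) := fun _ h1 h2 =>
  isUnit_of_dvd_of_dvd_star h (h1.trans (EuclideanDomain.gcd_dvd_left _ _))
    (h2.trans (star_dvd_star (EuclideanDomain.gcd_dvd_left _ _)))
    (h1.trans (EuclideanDomain.gcd_dvd_right _ _))

theorem isRelPrime_gcd_star (hcop : IsRelPrime (gcd z r) (star (gcd z r))) :
    IsRelPrime (gcd z r) (star z) := by
  intro g h1 h2
  refine hcop h1 ?_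
  have hg : star g ∣ gcd z r := EuclideanDomain.dvd_gcd (by simpa using star_dvd_star h2)
    (by simpa using star_dvd_star (h1.trans (EuclideanDomain.gcd_dvd_right _ _)))
  simpa using star_dvd_star hg

theorem dvd_norm_gcd (h : r ∣ z.norm) : r ∣ (gcd z r).norm := by
  set A := gcdA z (r : GaussianInt)
  set B := gcdB z (r : GaussianInt)
  rw [← Zsqrtd.intCast_dvd_intCast (d := -1), Zsqrtd.norm_eq_mul_conj] at h ⊢
  obtain ⟨k, hk⟩ := h
  refine ⟨k * A * star A + z * A * star B + B * star z * star A + r * B * star B, ?_⟩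
  rw [EuclideanDomain.gcd_eq_gcd_ab]
  simp only [star_add, star_mul, star_intCast]
  linear_combination (A * star A) * hk

theorem norm_dvd_of_isRelPrime_star {x : GaussianInt} (hx : IsRelPrime x (star x))
    (h : x ∣ r) : x.norm ∣ r := by
  rw [← Zsqrtd.intCast_dvd_intCast (d := -1), Zsqrtd.norm_eq_mul_conj]
  exact hx.isCoprime.mul_dvd h (by simpa using star_dvd_star h)

theorem norm_gcd_eq (hr : 0 ≤ r) (hcop : IsRelPrime (gcd z r) (star (gcd z r)))
    (h : r ∣ z.norm) : (gcd z r).norm = r :=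
  Int.dvd_antisymm (Zsqrtd.norm_nonneg (by norm_num) _) hr
    (norm_dvd_of_isRelPrime_star hcop (EuclideanDomain.gcd_dvd_right _ _)) (dvd_norm_gcd h)

theorem sq_dvd_of_sq_dvd_norm {x w : GaussianInt} (hcop : IsRelPrime x (star z))
    (hx : x * star x = r) (hw : (r : GaussianInt) ∣ w - z) (hN : r ^ 2 ∣ w.norm) :
    x ^ 2 ∣ w := by
  obtain ⟨k, hk⟩ := hw
  have hstar : star w = star z + x * (star x * star k) := by
    rw [show w = z + x * star x * k by rw [hx]; linear_combination hk]
    simp only [star_add, star_mul, star_star]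
    ring
  have hcop' : IsCoprime x (star w) := hstar ▸ hcop.isCoprime.add_mul_left_right _
  have hdvd : x ^ 2 ∣ w * star w := by
    rw [← Zsqrtd.norm_eq_mul_conj]
    have hxr : x ^ 2 ∣ (r : GaussianInt) ^ 2 := ⟨star x ^ 2, by rw [← hx]; ring⟩
    exact hxr.trans (mod_cast (Zsqrtd.intCast_dvd_intCast (d := -1) _ _).2 hN)
  exact hcop'.pow_left.dvd_of_dvd_mul_right hdvd

end GaussianInt

open GaussianInt in
/-- Key step of the lattice-embedding theorem in the plane, via Gaussian-integer GCD.
`Z` represents `r` times a rational point with LCD `r`. -/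
theorem gaussian_gcd_embedding_step (r : ℤ) (hr : 0 < r) (Z : GaussianInt)
    (hprim : Int.gcd (Int.gcd Z.re Z.im) r = 1)
    (hdvd : r ^ 2 ∣ Zsqrtd.norm Z)
    (X : GaussianInt) (hX : X = EuclideanDomain.gcd Z (r : GaussianInt)) :
    Zsqrtd.norm X = r ∧
    (∃ Z' : GaussianInt, (star X) ^ 2 * Z = (r : GaussianInt) ^ 2 * Z') ∧
    (∀ Q : GaussianInt, r ^ 2 ∣ Zsqrtd.norm ((r : GaussianInt) * Q - Z) →
      ∃ Q' : GaussianInt, (star X) ^ 2 * Q = (r : GaussianInt) * Q') := by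
  have hnorm : Z.norm = Z.re ^ 2 + Z.im ^ 2 := by rw [Zsqrtd.norm_def]; ring
  have hcop := isRelPrime_gcd_star_gcd (Int.gcd_gcd_two_mul_eq_one hprim (hnorm ▸ hdvd))
  have hN := norm_gcd_eq hr.le hcop ((dvd_pow_self r two_ne_zero).trans hdvd)
  have hcopZ := isRelPrime_gcd_star hcop
  rw [← hX] at hN hcopZ
  have hXr : X * star X = r := by rw [← Zsqrtd.norm_eq_mul_conj, hN]
  obtain ⟨Z', hZ'⟩ := sq_dvd_of_sq_dvd_norm hcopZ hXr (by simp) hdvd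
  refine ⟨hN, ⟨Z', ?_⟩, fun Q hQ => ?_⟩
  · linear_combination star X ^ 2 * hZ' + (X * star X + r) * Z' * hXr
  have hZQ := sq_dvd_of_sq_dvd_norm (w := Z - r * Q) hcopZ hXr ⟨-Q, by ring⟩
    (by rwa [← neg_sub, Zsqrtd.norm_neg])
  obtain ⟨T, hT⟩ : X ^ 2 ∣ r * Q := by simpa using dvd_sub ⟨Z', hZ'⟩ hZQ
  have hr0 : (r : GaussianInt) ≠ 0 := by exact_mod_cast hr.ne'
  refine ⟨T, mul_left_cancel₀ hr0 ?_⟩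
  linear_combination star X ^ 2 * hT + (X * star X + r) * T * hXr
end

section
/- Let ι be a finite index type and let f : ι → (Fin 2 → ℚ) be a family of points in the rational plane such that for all i, j, the squared distance ∑ k, (f i k − f j k)^2 is an integer. Then there exists a family g : ι → (Fin 2 → ℤ) of lattice points such that for all i, j, ∑ k, ((g i k : ℚ) − g j k)^2 = ∑ k, (f i k − f j k)^2. -/
open Zsqrtd

local notation "ℤi" => GaussianInt

namespace LatticeEmb

lemma star_dvd {x y : ℤi} (h : x ∣ y) : star x ∣ star y := by
  obtain ⟨c, rfl⟩ := h
  exact ⟨star c, by rw [star_mul, mul_comm]⟩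

lemma norm_dvd_norm {x y : ℤi} (h : x ∣ y) : x.norm ∣ y.norm := by
  obtain ⟨c, rfl⟩ := h
  exact ⟨c.norm, Zsqrtd.norm_mul x c⟩

lemma prime_of_norm_prime {π : ℤi} {p : ℕ} (hp : p.Prime) (h : π.norm = (p : ℤ)) :
    Prime π := by
  have hirr : Irreducible π := by
    constructor
    · intro hu
      rw [← Zsqrtd.norm_eq_one_iff' (by norm_num : (-1 : ℤ) ≤ 0)] at hu
      rw [h] at hu
      have := hp.one_lt
      omega
    · intro x y hxy
      have hn : x.norm.natAbs * y.norm.natAbs = p := by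
        rw [← Int.natAbs_mul, ← Zsqrtd.norm_mul, ← hxy, h, Int.natAbs_natCast]
      rcases (Nat.Prime.eq_one_or_self_of_dvd hp _ ⟨_, hn.symm⟩) with h1 | h1
      · exact Or.inl (Zsqrtd.norm_eq_one_iff.1 h1)
      · right
        apply Zsqrtd.norm_eq_one_iff.1
        have hp0 : 0 < p := hp.pos
        rw [h1] at hn
        nlinarith [hn]
  exact hirr.prime

lemma cast_norm_dvd {p : ℕ} {w : ℤi} (h : ((p : ℤ)) ^ 2 ∣ w.norm) :
    ((p : ℤi)) ^ 2 ∣ w * star w := by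
  obtain ⟨t, ht⟩ := h
  refine ⟨(t : ℤi), ?_⟩
  rw [← Zsqrtd.norm_eq_mul_conj, ht]
  push_cast
  ring

lemma trichotomy {p : ℕ} {π w : ℤi} (hπ : Prime π) (hππ : π * star π = (p : ℤi))
    (hw : ((p : ℤi)) ^ 2 ∣ w * star w) :
    π ^ 2 ∣ w ∨ (p : ℤi) ∣ w ∨ (star π) ^ 2 ∣ w := by
  have hp2 : ((p : ℤi)) ^ 2 = π ^ 2 * (star π) ^ 2 := by rw [← hππ]; ring
  by_cases h1 : π ∣ w
  · by_cases h2 : π ^ 2 ∣ w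
    · exact Or.inl h2
    · obtain ⟨w₁, rfl⟩ := h1
      have hnw₁ : ¬ π ∣ w₁ := fun hh => h2 (by
        obtain ⟨c, rfl⟩ := hh; exact ⟨c, by ring⟩)
      have hp0 : (p : ℤi) ≠ 0 := by
        intro h0
        rw [← hππ] at h0
        rcases mul_eq_zero.1 h0 with h0 | h0
        · exact hπ.ne_zero h0
        · exact hπ.ne_zero (by simpa using congrArg star h0)
      have hdvd : (p : ℤi) ∣ w₁ * star w₁ := by
        have hw' : (p : ℤi) * (p : ℤi) ∣ (p : ℤi) * (w₁ * star w₁) := by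
          have : (π * w₁) * star (π * w₁) = (p : ℤi) * (w₁ * star w₁) := by
            rw [star_mul, ← hππ]; ring
          rw [← this, ← sq]
          exact hw
        exact (mul_dvd_mul_iff_left hp0).1 hw'
      have hπd : π ∣ w₁ * star w₁ := dvd_trans ⟨star π, hππ.symm⟩ hdvd
      rcases hπ.2.2 _ _ hπd with hh | hh
      · exact absurd hh hnw₁
      · refine Or.inr (Or.inl ?_)
        have : star π ∣ w₁ := by simpa using star_dvd hh
        obtain ⟨t, ht⟩ := this
        exact ⟨t, by rw [ht, ← hππ]; ring⟩
  · have hd : π ^ 2 ∣ w * star w := dvd_trans ⟨(star π) ^ 2, hp2⟩ hw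
    have := hπ.pow_dvd_of_dvd_mul_left 2 h1 hd
    refine Or.inr (Or.inr ?_)
    simpa using star_dvd this

lemma pair_dvd {p : ℕ} {π w : ℤi} (hπ : Prime π) (hnd : ¬ π ∣ star π)
    (hππ : π * star π = (p : ℤi)) (h1 : π ∣ w) (h2 : star π ∣ w) : (p : ℤi) ∣ w := by
  obtain ⟨t, rfl⟩ := h2
  rcases hπ.2.2 _ _ h1 with hh | hh
  · exact absurd hh hnd
  · obtain ⟨s, rfl⟩ := hh
    exact ⟨s, by rw [← hππ]; ring⟩

lemma all_sq_dvd {ι : Type*} {p : ℕ} {π : ℤi} (hπ : Prime π) (hnd : ¬ π ∣ star π)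
    (hππ : π * star π = (p : ℤi)) (w : ι → ℤi)
    (h1 : ∀ j, ((p : ℤi)) ^ 2 ∣ w j * star (w j))
    (h2 : ∀ j k, ((p : ℤi)) ^ 2 ∣ (w j - w k) * star (w j - w k))
    (k0 : ι) (hk0 : π ^ 2 ∣ w k0) (hk0' : ¬ (p : ℤi) ∣ w k0) :
    ∀ j, π ^ 2 ∣ w j := by
  have hπk0 : π ∣ w k0 := dvd_trans (dvd_pow_self π two_ne_zero) hk0
  have hstark0 : ¬ star π ∣ w k0 := fun hh => hk0' (pair_dvd hπ hnd hππ hπk0 hh)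
  intro j
  rcases trichotomy hπ hππ (h1 j) with H | H | H
  · exact H
  all_goals {
    have hsj : star π ∣ w j := by
      first
      | exact dvd_trans ⟨π, by rw [← hππ]; ring⟩ H
      | exact dvd_trans (dvd_pow_self (star π) two_ne_zero) H
    have hsd : ¬ star π ∣ (w j - w k0) := fun hh => hstark0 (by
      have := dvd_sub hsj hh
      simpa using this)
    rcases trichotomy hπ hππ (h2 j k0) with G | G | G
    · have := dvd_add G hk0
      simpa using this
    · exact absurd (dvd_trans ⟨π, by rw [← hππ]; ring⟩ G) hsd
    · exact absurd (dvd_trans (dvd_pow_self (star π) two_ne_zero) G) hsd }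

lemma two_dvd_of_four_dvd_norm {w : ℤi} (h : (4 : ℤ) ∣ w.norm) : (2 : ℤi) ∣ w := by
  have key : ∀ x y : ZMod 4, x * x + y * y = 0 → (x = 0 ∨ x = 2) ∧ (y = 0 ∨ y = 2) := by
    decide
  have hnorm : w.norm = w.re * w.re + w.im * w.im := by
    rw [Zsqrtd.norm_def]; ring
  have h0 : ((w.re : ZMod 4)) * (w.re : ZMod 4) + (w.im : ZMod 4) * (w.im : ZMod 4) = 0 := by
    have h4 : ((w.norm : ZMod 4)) = 0 := by
      rw [ZMod.intCast_zmod_eq_zero_iff_dvd]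
      exact_mod_cast h
    rw [hnorm] at h4
    push_cast at h4
    exact h4
  obtain ⟨hre, him⟩ := key _ _ h0
  have h2 : ∀ a : ℤ, ((a : ZMod 4) = 0 ∨ (a : ZMod 4) = 2) → (2 : ℤ) ∣ a := by
    intro a ha
    rcases ha with ha | ha
    · have := (ZMod.intCast_zmod_eq_zero_iff_dvd a 4).1 ha
      omega
    · have : ((a - 2 : ℤ) : ZMod 4) = 0 := by push_cast; rw [ha]; ring
      have := (ZMod.intCast_zmod_eq_zero_iff_dvd _ 4).1 this
      omega
  have : ((2 : ℤ) : ℤi) ∣ w := (Zsqrtd.intCast_dvd 2 w).2 ⟨h2 _ hre, h2 _ him⟩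
  exact_mod_cast this

lemma not_dvd_star {p a b : ℕ} (hp : p.Prime) (hp2 : p ≠ 2) (hab : a ^ 2 + b ^ 2 = p)
    (hπ : Prime (⟨(a : ℤ), (b : ℤ)⟩ : ℤi)) :
    ¬ (⟨(a : ℤ), (b : ℤ)⟩ : ℤi) ∣ star (⟨(a : ℤ), (b : ℤ)⟩ : ℤi) := by
  intro hd
  set π : ℤi := ⟨(a : ℤ), (b : ℤ)⟩ with hπdef
  have hnorm : π.norm = (p : ℤ) := by
    rw [Zsqrtd.norm_def]
    push_cast [← hab]
    ring
  have hsum : π + star π = ((2 * a : ℤ) : ℤi) := by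
    rw [Zsqrtd.star_mk]
    ext <;> simp <;> ring
  have h2a : π ∣ ((2 : ℤi) * ((a : ℤ) : ℤi)) := by
    have : π ∣ π + star π := dvd_add dvd_rfl hd
    rw [hsum] at this
    convert this using 1
    push_cast
    ring
  rcases hπ.2.2 _ _ h2a with hh | hh
  · have := norm_dvd_norm hh
    rw [hnorm] at this
    have h24 : ((2 : ℤi)).norm = 4 := by decide
    rw [h24] at this
    have hpd : (p : ℤ) ∣ 4 := this
    have h4' : p ∣ 4 := by exact_mod_cast hpd
    have h2' : p ∣ 2 := hp.dvd_of_dvd_pow (n := 2) (by norm_num; exact h4')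
    have := Nat.le_of_dvd (by norm_num) h2'
    have := hp.two_le
    omega
  · have := norm_dvd_norm hh
    rw [hnorm, Zsqrtd.norm_intCast] at this
    have hpa : (p : ℤ) ∣ (a : ℤ) * (a : ℤ) := this
    have hpa' : p ∣ a * a := by exact_mod_cast hpa
    have hpa2 : p ∣ a := hp.dvd_of_dvd_pow (n := 2) (by rwa [sq])
    rcases Nat.eq_zero_or_pos a with ha0 | ha0
    · -- a = 0, p = b ^ 2
      subst ha0
      have hbb : b * b = p := by nlinarith [hab]
      rcases (Nat.Prime.eq_one_or_self_of_dvd hp b ⟨b, hbb.symm⟩) with hb | hb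
      · subst hb
        have := hp.one_lt
        omega
      · subst hb
        have := hp.one_lt
        nlinarith [hbb]
    · have hle : p ≤ a := Nat.le_of_dvd ha0 hpa2
      nlinarith [hp.one_lt]

lemma core {ι : Type*} (p : ℕ) (hp : p.Prime) (w : ι → ℤi)
    (h1 : ∀ j, ((p : ℤ)) ^ 2 ∣ (w j).norm)
    (h2 : ∀ j k, ((p : ℤ)) ^ 2 ∣ (w j - w k).norm) :
    ∃ c : ℤi, c.norm = ((p : ℤ)) ^ 2 ∧ ∀ j, c ∣ w j := by
  haveI : Fact p.Prime := ⟨hp⟩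
  have hnormp : ((p : ℤi)).norm = ((p : ℤ)) ^ 2 := by
    rw [Zsqrtd.norm_natCast]; push_cast; ring
  by_cases hall : ∀ j, (p : ℤi) ∣ w j
  · exact ⟨(p : ℤi), hnormp, hall⟩
  push_neg at hall
  obtain ⟨k0, hk0⟩ := hall
  by_cases h4 : p % 4 = 3
  · exfalso
    have hpp : Prime (p : ℤi) :=
      (GaussianInt.prime_iff_mod_four_eq_three_of_nat_prime p).2 h4
    apply hk0
    have hd : (p : ℤi) ∣ w k0 * star (w k0) :=
      dvd_trans (dvd_pow_self _ two_ne_zero) (cast_norm_dvd (h1 k0))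
    rcases hpp.2.2 _ _ hd with hh | hh
    · exact hh
    · have := star_dvd hh
      simpa using this
  by_cases hp2 : p = 2
  · subst hp2
    exfalso
    apply hk0
    have : (4 : ℤ) ∣ (w k0).norm := by
      have := h1 k0
      norm_num at this
      exact this
    exact_mod_cast two_dvd_of_four_dvd_norm this
  · obtain ⟨a, b, hab⟩ := Nat.Prime.sq_add_sq h4
    set π : ℤi := ⟨(a : ℤ), (b : ℤ)⟩ with hπdef
    have hnorm : π.norm = (p : ℤ) := by
      rw [Zsqrtd.norm_def]
      push_cast [← hab]
      ring
    have hπ : Prime π := prime_of_norm_prime hp hnorm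
    have hππ : π * star π = (p : ℤi) := by
      have := Zsqrtd.norm_eq_mul_conj π
      rw [hnorm] at this
      rw [← this]
      push_cast
      ring
    have hnd : ¬ π ∣ star π := not_dvd_star hp hp2 hab hπ
    have hπ' : Prime (star π) := prime_of_norm_prime hp (by rw [Zsqrtd.norm_conj, hnorm])
    have hnd' : ¬ star π ∣ π := by
      intro hdd
      exact hnd (by simpa using star_dvd hdd)
    have hππ' : star π * star (star π) = (p : ℤi) := by
      rw [star_star, mul_comm]; exact hππ
    have h1' : ∀ j, ((p : ℤi)) ^ 2 ∣ w j * star (w j) := fun j => cast_norm_dvd (h1 j)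
    have h2' : ∀ j k, ((p : ℤi)) ^ 2 ∣ (w j - w k) * star (w j - w k) :=
      fun j k => cast_norm_dvd (h2 j k)
    rcases trichotomy hπ hππ (h1' k0) with H | H | H
    · refine ⟨π ^ 2, ?_, all_sq_dvd hπ hnd hππ w h1' h2' k0 H hk0⟩
      rw [pow_two, Zsqrtd.norm_mul, hnorm, pow_two]
    · exact absurd H hk0
    · refine ⟨(star π) ^ 2, ?_, all_sq_dvd hπ' (by rw [star_star]; exact hnd') hππ' w h1' h2' k0 H hk0⟩
      rw [pow_two, Zsqrtd.norm_mul, Zsqrtd.norm_conj, hnorm, pow_two]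

lemma key {ι : Type*} : ∀ d : ℕ, 0 < d → ∀ w : ι → ℤi,
    (∀ j, ((d : ℤ)) ^ 2 ∣ (w j).norm) →
    (∀ j k, ((d : ℤ)) ^ 2 ∣ (w j - w k).norm) →
    ∃ v : ι → ℤi, ∀ j k, (v j - v k).norm * ((d : ℤ)) ^ 2 = (w j - w k).norm := by
  intro d
  induction d using Nat.strong_induction_on with
  | _ d IH =>
    intro hd w h1 h2
    by_cases hd1 : d = 1
    · subst hd1
      exact ⟨w, fun j k => by norm_num⟩
    · set p := d.minFac with hpdef
      have hp : p.Prime := Nat.minFac_prime hd1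
      have hpd : p ∣ d := Nat.minFac_dvd d
      obtain ⟨e, hde⟩ := hpd
      have he : 0 < e := by
        rcases Nat.eq_zero_or_pos e with h0 | h0
        · rw [h0, Nat.mul_zero] at hde; omega
        · exact h0
      have hlt : e < d := by
        rw [hde]
        have := hp.one_lt
        nlinarith
      have hd2 : ((d : ℤ)) ^ 2 = ((p : ℤ)) ^ 2 * ((e : ℤ)) ^ 2 := by
        rw [hde]; push_cast; ring
      have hp0 : ((p : ℤ)) ^ 2 ≠ 0 := by
        have := hp.pos
        positivity
      obtain ⟨c, hcn, hcd⟩ := core p hp w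
        (fun j => dvd_trans ⟨((e : ℤ)) ^ 2, hd2⟩ (h1 j))
        (fun j k => dvd_trans ⟨((e : ℤ)) ^ 2, hd2⟩ (h2 j k))
      choose v hv using hcd
      have hnormjk : ∀ j k, (w j - w k).norm = ((p : ℤ)) ^ 2 * (v j - v k).norm := by
        intro j k
        rw [hv j, hv k, ← mul_sub, Zsqrtd.norm_mul, hcn]
      have h1' : ∀ j, ((e : ℤ)) ^ 2 ∣ (v j).norm := by
        intro j
        have hj := h1 j
        rw [hv j, Zsqrtd.norm_mul, hcn, hd2] at hj
        exact (mul_dvd_mul_iff_left hp0).1 hj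
      have h2' : ∀ j k, ((e : ℤ)) ^ 2 ∣ (v j - v k).norm := by
        intro j k
        have hjk := h2 j k
        rw [hnormjk j k, hd2] at hjk
        exact (mul_dvd_mul_iff_left hp0).1 hjk
      obtain ⟨v', hv'⟩ := IH e hlt he v h1' h2'
      refine ⟨v', fun j k => ?_⟩
      rw [hnormjk j k, ← hv' j k, hd2]
      ring

end LatticeEmb

/-- Any finite family of points of `ℚ²` with integer pairwise squared distances
may be embedded congruently in the lattice `ℤ²`. -/
theorem lattice_embedding_plane {ι : Type*} [Fintype ι] (f : ι → Fin 2 → ℚ)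
    (h : ∀ i j : ι, ∃ n : ℤ, ∑ k, (f i k - f j k) ^ 2 = (n : ℚ)) :
    ∃ g : ι → Fin 2 → ℤ, ∀ i j : ι,
      ∑ k, ((g i k : ℚ) - (g j k : ℚ)) ^ 2 = ∑ k, (f i k - f j k) ^ 2 := by
  rcases isEmpty_or_nonempty ι with hemp | hne
  · exact ⟨fun _ _ => 0, fun i j => (hemp.false i).elim⟩
  obtain ⟨i0⟩ := hne
  set q : ι → Fin 2 → ℚ := fun j k => f j k - f i0 k with hq
  set D : ℕ := ∏ j, ((q j 0).den * (q j 1).den) with hDdef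
  have hD : 0 < D := Finset.prod_pos (fun j _ => Nat.mul_pos (q j 0).pos (q j 1).pos)
  have hden : ∀ j (k : Fin 2), ((q j k).den : ℤ) ∣ (D : ℤ) := by
    intro j k
    have hmem : (q j 0).den * (q j 1).den ∣ D :=
      Finset.dvd_prod_of_mem _ (Finset.mem_univ j)
    have : (q j k).den ∣ (q j 0).den * (q j 1).den := by
      fin_cases k
      · exact Dvd.intro _ rfl
      · exact Dvd.intro_left _ rfl
    exact_mod_cast dvd_trans this hmem
  have hint : ∀ j (k : Fin 2), ∃ m : ℤ, (m : ℚ) = q j k * (D : ℚ) := by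
    intro j k
    obtain ⟨c, hc⟩ := hden j k
    refine ⟨(q j k).num * c, ?_⟩
    have hd0 : ((q j k).den : ℚ) ≠ 0 := by positivity
    have hcQ : ((D : ℕ) : ℚ) = ((q j k).den : ℚ) * (c : ℚ) := by exact_mod_cast hc
    have hmd : ((q j k).num : ℚ) = q j k * ((q j k).den : ℚ) := by
      have hmd' := div_mul_cancel₀ ((q j k).num : ℚ) hd0
      rw [Rat.num_div_den] at hmd'
      exact hmd'.symm
    push_cast
    linear_combination (c : ℚ) * hmd - (q j k) * hcQ
  choose A hA using hint
  set w : ι → GaussianInt := fun j => ⟨A j 0, A j 1⟩ with hw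
  have hsub : ∀ j k (m : Fin 2), ((A j m - A k m : ℤ) : ℚ) = (f j m - f k m) * (D : ℚ) := by
    intro j k m
    push_cast
    rw [hA j m, hA k m]
    simp only [hq]
    ring
  have hnorm : ∀ j k, (((w j - w k).norm : ℤ) : ℚ)
      = (D : ℚ) ^ 2 * ∑ m, (f j m - f k m) ^ 2 := by
    intro j k
    rw [Zsqrtd.norm_def]
    have h0 := hsub j k 0
    have h1 := hsub j k 1
    push_cast
    rw [Fin.sum_univ_two]
    simp only [Zsqrtd.re_sub, Zsqrtd.im_sub, hw]
    push_cast at h0 h1 ⊢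
    linear_combination ((A j 0 : ℚ) - (A k 0 : ℚ) + (f j 0 - f k 0) * (D : ℚ)) * h0 +
      ((A j 1 : ℚ) - (A k 1 : ℚ) + (f j 1 - f k 1) * (D : ℚ)) * h1
  have hpair : ∀ j k, ((D : ℤ)) ^ 2 ∣ (w j - w k).norm := by
    intro j k
    obtain ⟨n, hn⟩ := h j k
    refine ⟨n, ?_⟩
    have : (((w j - w k).norm : ℤ) : ℚ) = (((D : ℤ) ^ 2 * n : ℤ) : ℚ) := by
      rw [hnorm j k, hn]; push_cast; ring
    exact_mod_cast this
  have hwi0 : w i0 = 0 := by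
    have h0 : A i0 0 = 0 := by
      have := hA i0 0
      simp only [hq, sub_self, zero_mul] at this
      exact_mod_cast this
    have h1 : A i0 1 = 0 := by
      have := hA i0 1
      simp only [hq, sub_self, zero_mul] at this
      exact_mod_cast this
    rw [hw]
    ext <;> simp [h0, h1]
  have hone : ∀ j, ((D : ℤ)) ^ 2 ∣ (w j).norm := by
    intro j
    have := hpair j i0
    rwa [hwi0, sub_zero] at this
  obtain ⟨v, hv⟩ := LatticeEmb.key D hD w hone hpair
  refine ⟨fun j => ![(v j).re, (v j).im], fun i j => ?_⟩
  have h3 : (((v i - v j).norm : ℤ) : ℚ) * (D : ℚ) ^ 2 = (((w i - w j).norm : ℤ) : ℚ) := by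
    exact_mod_cast congrArg (fun z : ℤ => (z : ℚ)) (hv i j)
  rw [hnorm i j] at h3
  have h4 : (((v i - v j).norm : ℤ) : ℚ)
      = (((v i).re : ℚ) - ((v j).re : ℚ)) ^ 2 + (((v i).im : ℚ) - ((v j).im : ℚ)) ^ 2 := by
    rw [Zsqrtd.norm_def]
    push_cast [Zsqrtd.re_sub, Zsqrtd.im_sub]
    ring
  have hD0 : (D : ℚ) ^ 2 ≠ 0 := by positivity
  have h5 : (((v i - v j).norm : ℤ) : ℚ) = ∑ m, (f i m - f j m) ^ 2 := by
    exact mul_right_cancel₀ hD0 (by linear_combination h3)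
  rw [Fin.sum_univ_two]
  simp only [Matrix.cons_val_zero, Matrix.cons_val_one, Matrix.head_cons]
  rw [← h4, h5]
end

section
/- Let a, b, c be positive integers forming a Heronian triangle, i.e. there exists d ∈ ℚ with (4d)^2 = (a+b+c)(a+b−c)(a−b+c)(−a+b+c). Then there exist lattice points P, Q, R : Fin 2 → ℤ with ∑ k, (P k − Q k)^2 = a^2, ∑ k, (P k − R k)^2 = b^2, and ∑ k, (Q k − R k)^2 = c^2. -/
/-!
Heron's formula says `(4d)² + (a² + b² - c²)² = 4a²b²`, so `4d` is an integer, and reducing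
mod 4 shows both terms are even: `s² + t² = a²b²` with `2t = a² + b² - c²`. In `ℤ[i]`, the
element `t + si` of norm `a²b²` factors as `z₁ * conj z₂` with `N z₁ = a²` and `N z₂ = b²`,
built prime by prime: a rational prime `p` with `p² ∣ N w` always has a divisor of `w` of norm
`p²` above it, since `p` is either inert or splits as `π * conj π`. The lattice triangle
`0, z₁, z₂` has sides `a`, `b` and `N (z₁ - z₂) = a² + b² - 2 Re (z₁ * conj z₂) = c²`.
-/

local notation "ℤ[i]" => GaussianInt

theorem star_dvd_of_dvd_star {R : Type*} [CommMonoid R] [StarMul R] {x y : R} (h : x ∣ star y) :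
    star x ∣ y := by
  obtain ⟨k, hk⟩ := h
  exact ⟨star k, by rw [← star_star y, hk, star_mul']⟩

namespace Zsqrtd

variable {d : ℤ}

theorem irreducible_of_prime_norm {z : ℤ√d} (h : Prime z.norm) : Irreducible z := by
  refine ⟨fun hz => h.not_isUnit (Int.isUnit_iff_natAbs_eq.2 (norm_eq_one_iff.2 hz)), ?_⟩
  rintro u v rfl
  rw [norm_mul] at h
  exact (h.irreducible.isUnit_or_isUnit rfl).imp
    (fun hu => norm_eq_one_iff.1 (Int.isUnit_iff_natAbs_eq.1 hu))
    (fun hv => norm_eq_one_iff.1 (Int.isUnit_iff_natAbs_eq.1 hv))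

theorem intCast_dvd_mul_star_of_dvd_norm {n : ℤ} {w : ℤ√d} (h : n ∣ w.norm) :
    (n : ℤ√d) ∣ w * star w :=
  norm_eq_mul_conj w ▸ map_dvd (Int.castRingHom (ℤ√d)) h

theorem norm_sub (z w : ℤ√d) : (z - w).norm = z.norm + w.norm - 2 * (z * star w).re := by
  simp only [norm_def, re_sub, im_sub, re_mul, re_star, im_star]
  ring

end Zsqrtd

namespace GaussianInt

open Zsqrtd

theorem dvd_or_star_dvd_of_norm_dvd_norm {ρ w : ℤ[i]} (hρ : Prime ρ.norm)
    (h : ρ.norm ∣ w.norm) : ρ ∣ w ∨ star ρ ∣ w := by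
  have hρw : ρ ∣ w * star w :=
    (Dvd.intro _ (norm_eq_mul_conj ρ).symm).trans (intCast_dvd_mul_star_of_dvd_norm h)
  exact (irreducible_of_prime_norm hρ).prime.dvd_or_dvd hρw |>.imp id star_dvd_of_dvd_star

theorem exists_dvd_norm_eq_sq_of_prime {p : ℕ} (hp : p.Prime) {w : ℤ[i]}
    (h : (p : ℤ) ^ 2 ∣ w.norm) : ∃ u, u ∣ w ∧ u.norm = (p : ℤ) ^ 2 := by
  have := Fact.mk hp
  have hpZ : Prime (p : ℤ) := Nat.prime_iff_prime_int.1 hp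
  have hpw : (p : ℤ) ∣ w.norm := (dvd_pow_self _ two_ne_zero).trans h
  by_cases hp3 : p % 4 = 3
  · refine ⟨p, ?_, by rw [norm_natCast, sq]⟩
    have hpp : Prime (p : ℤ[i]) := (prime_iff_mod_four_eq_three_of_nat_prime p).2 hp3
    refine (hpp.dvd_or_dvd (intCast_dvd_mul_star_of_dvd_norm hpw)).elim id fun h' => ?_
    simpa using star_dvd_of_dvd_star h'
  obtain ⟨m, n, hmn⟩ := Nat.Prime.sq_add_sq hp3
  have hρ : (⟨m, n⟩ : ℤ[i]).norm = p := by
    rw [norm_def, ← hmn]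
    push_cast
    ring
  obtain ⟨π, hπ, w₁, rfl⟩ : ∃ π : ℤ[i], π.norm = p ∧ π ∣ w := by
    rcases dvd_or_star_dvd_of_norm_dvd_norm (hρ ▸ hpZ) (hρ ▸ hpw) with h' | h'
    · exact ⟨_, hρ, h'⟩
    · exact ⟨_, by rw [norm_conj, hρ], h'⟩
  have hpw₁ : (p : ℤ) ∣ w₁.norm := by
    rw [Zsqrtd.norm_mul, hπ, sq] at h
    exact (mul_dvd_mul_iff_left hpZ.ne_zero).1 h
  rcases dvd_or_star_dvd_of_norm_dvd_norm (hπ ▸ hpZ) (hπ ▸ hpw₁) with ⟨w₂, rfl⟩ | ⟨w₂, rfl⟩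
  · exact ⟨π * π, ⟨w₂, by ring⟩, by rw [Zsqrtd.norm_mul, hπ, sq]⟩
  · exact ⟨π * star π, ⟨w₂, by ring⟩, by rw [Zsqrtd.norm_mul, norm_conj, hπ, sq]⟩

theorem exists_dvd_norm_eq_sq_of_sq_dvd_norm (m : ℕ) {w : ℤ[i]} (h : (m : ℤ) ^ 2 ∣ w.norm) :
    ∃ u, u ∣ w ∧ u.norm = (m : ℤ) ^ 2 := by
  induction m using induction_on_primes generalizing w with
  | zero => exact ⟨w, dvd_rfl, by simpa using h⟩
  | one => exact ⟨1, one_dvd w, by simp⟩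
  | prime_mul p m hp ih =>
    push_cast at h ⊢
    obtain ⟨u, ⟨v, rfl⟩, hu⟩ :=
      exists_dvd_norm_eq_sq_of_prime hp ((pow_dvd_pow_of_dvd (dvd_mul_right _ _) 2).trans h)
    rw [Zsqrtd.norm_mul, hu, mul_pow] at h
    have hp0 : (p : ℤ) ^ 2 ≠ 0 := pow_ne_zero 2 (mod_cast hp.ne_zero)
    obtain ⟨v', hv', hv'm⟩ := ih ((mul_dvd_mul_iff_left hp0).1 h)
    exact ⟨u * v', mul_dvd_mul_left u hv', by rw [Zsqrtd.norm_mul, hu, hv'm, mul_pow]⟩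

theorem exists_eq_mul_star_of_norm_eq {a b : ℤ} {w : ℤ[i]} (h : w.norm = a ^ 2 * b ^ 2) :
    ∃ z₁ z₂ : ℤ[i], z₁.norm = a ^ 2 ∧ z₂.norm = b ^ 2 ∧ w = z₁ * star z₂ := by
  rcases eq_or_ne a 0 with rfl | ha
  · have hw : w = 0 := norm_eq_zero.1 (by simpa using h)
    exact ⟨0, b, by simp, by rw [norm_intCast, sq], by simp [hw]⟩
  obtain ⟨u, ⟨v, rfl⟩, hu⟩ := exists_dvd_norm_eq_sq_of_sq_dvd_norm a.natAbs (w := w)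
    (by rw [Int.natCast_natAbs, sq_abs, h]; exact dvd_mul_right _ _)
  rw [Int.natCast_natAbs, sq_abs] at hu
  have hv : v.norm = b ^ 2 :=
    mul_left_cancel₀ (pow_ne_zero 2 ha) (by rw [← h, Zsqrtd.norm_mul, hu])
  exact ⟨u, star v, hu, by rwa [norm_conj], by rw [star_star]⟩

def toPoint (z : ℤ[i]) : Fin 2 → ℤ := ![z.re, z.im]

theorem sum_sq_sub_toPoint (z w : ℤ[i]) :
    ∑ k, (toPoint z k - toPoint w k) ^ 2 = (z - w).norm := by
  simp [toPoint, Fin.sum_univ_two, Zsqrtd.norm_def]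
  ring

end GaussianInt

theorem Int.even_and_even_of_four_dvd_sq_add_sq {x y : ℤ} (h : 4 ∣ x ^ 2 + y ^ 2) :
    Even x ∧ Even y := by
  rcases Int.even_or_odd' x with ⟨k, rfl | rfl⟩ <;>
    rcases Int.even_or_odd' y with ⟨l, rfl | rfl⟩
  · exact ⟨even_two_mul k, even_two_mul l⟩
  all_goals ring_nf at h; omega

theorem exists_sq_add_sq_of_heron {a b c : ℤ} (heron : ∃ d : ℚ, (4 * d) ^ 2 =
      ((a : ℚ) + b + c) * ((a : ℚ) + b - c) * ((a : ℚ) - b + c) * (-(a : ℚ) + b + c)) :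
    ∃ s t : ℤ, s ^ 2 + t ^ 2 = a ^ 2 * b ^ 2 ∧ 2 * t = a ^ 2 + b ^ 2 - c ^ 2 := by
  obtain ⟨d, hd⟩ := heron
  obtain ⟨n, hn⟩ : IsSquare ((a + b + c) * (a + b - c) * (a - b + c) * (-a + b + c)) :=
    Rat.isSquare_intCast_iff.1 ⟨4 * d, by push_cast; rw [← hd, sq]⟩
  have hsum : n ^ 2 + (a ^ 2 + b ^ 2 - c ^ 2) ^ 2 = 4 * (a ^ 2 * b ^ 2) := by
    linear_combination -hn
  obtain ⟨⟨s, rfl⟩, ⟨t, ht⟩⟩ :=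
    Int.even_and_even_of_four_dvd_sq_add_sq (hsum ▸ dvd_mul_right 4 _)
  rw [ht] at hsum
  exact ⟨s, t, mul_left_cancel₀ four_ne_zero (by linear_combination hsum), by rw [ht]; ring⟩

theorem heronian_triangle_lattice_embedding_general (a b c : ℤ)
    (heron : ∃ d : ℚ, (4 * d) ^ 2 =
      ((a : ℚ) + b + c) * ((a : ℚ) + b - c) * ((a : ℚ) - b + c) * (-(a : ℚ) + b + c)) :
    ∃ P Q R : Fin 2 → ℤ,
      (∑ k, (P k - Q k) ^ 2 = a ^ 2) ∧
      (∑ k, (P k - R k) ^ 2 = b ^ 2) ∧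
      (∑ k, (Q k - R k) ^ 2 = c ^ 2) := by
  obtain ⟨s, t, hst, ht⟩ := exists_sq_add_sq_of_heron heron
  have hnorm : (⟨t, s⟩ : ℤ[i]).norm = a ^ 2 * b ^ 2 := by
    rw [Zsqrtd.norm_def]
    linear_combination hst
  obtain ⟨z₁, z₂, h₁, h₂, hw⟩ := GaussianInt.exists_eq_mul_star_of_norm_eq hnorm
  have hre : t = (z₁ * star z₂).re := congrArg Zsqrtd.re hw
  refine ⟨GaussianInt.toPoint 0, GaussianInt.toPoint z₁, GaussianInt.toPoint z₂, ?_, ?_, ?_⟩ <;>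
    rw [GaussianInt.sum_sq_sub_toPoint]
  · rw [zero_sub, Zsqrtd.norm_neg, h₁]
  · rw [zero_sub, Zsqrtd.norm_neg, h₂]
  · rw [Zsqrtd.norm_sub, h₁, h₂, ← hre]
    linear_combination -ht

/-- Every Heronian triangle may be embedded congruently in the lattice `ℤ²`. -/
theorem heronian_triangle_lattice_embedding (a b c : ℤ)
    (ha : 0 < a) (hb : 0 < b) (hc : 0 < c)
    (heron : ∃ d : ℚ, (4 * d) ^ 2 =
      ((a : ℚ) + b + c) * ((a : ℚ) + b - c) * ((a : ℚ) - b + c) * (-(a : ℚ) + b + c)) :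
    ∃ P Q R : Fin 2 → ℤ,
      (∑ k, (P k - Q k) ^ 2 = a ^ 2) ∧
      (∑ k, (P k - R k) ^ 2 = b ^ 2) ∧
      (∑ k, (Q k - R k) ^ 2 = c ^ 2) :=
  heronian_triangle_lattice_embedding_general a b c heron
end

section
/- Let X and Y be Lipschitz quaternions (elements of Quaternion ℤ) with Y ≠ 0 and normSq Y odd. Then there exists Q ∈ Quaternion ℤ such that normSq (X − Y * Q) < normSq Y. -/
/-!
Left multiplication by `star Y` scales norms by `N = normSq Y` and turns `X - Y * Q` into
`star Y * X - N * Q`, so it suffices to approximate `star Y * X` by the lattice `N • ℍ[ℤ]` to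
within norm `N ^ 2`. Rounding each coordinate to the nearest multiple of `N` leaves an error of
at most `(N - 1) / 2` per coordinate when `N` is odd, hence a norm at most `(N - 1) ^ 2 < N ^ 2`.
(For even `N` the four errors can all equal `N / 2`, and the bound fails.)
-/

open Quaternion

theorem Int.two_mul_abs_bmod_le {m : ℕ} (hm : Odd m) (x : ℤ) : 2 * |x.bmod m| ≤ m - 1 := by
  obtain ⟨k, rfl⟩ := hm
  have hlo := Int.le_bmod (x := x) (m := 2 * k + 1) (by omega)
  have hhi := Int.bmod_lt (x := x) (m := 2 * k + 1) (by omega)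
  push_cast at hlo hhi ⊢
  rcases abs_cases (x.bmod (2 * k + 1)) with ⟨h, _⟩ | ⟨h, _⟩ <;> omega

theorem Quaternion.exists_normSq_sub_natCast_mul_le {m : ℕ} (hm : Odd m) (Z : ℍ[ℤ]) :
    ∃ Q : ℍ[ℤ], normSq (Z - (m : ℍ[ℤ]) * Q) ≤ ((m : ℤ) - 1) ^ 2 := by
  let Q : ℍ[ℤ] := ⟨Z.re.bdiv m, Z.imI.bdiv m, Z.imJ.bdiv m, Z.imK.bdiv m⟩
  refine ⟨Q, ?_⟩
  have hsq (x : ℤ) : 4 * (x - m * x.bdiv m) ^ 2 ≤ ((m : ℤ) - 1) ^ 2 := by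
    rw [← eq_sub_of_add_eq (Int.bmod_add_bdiv x m)]
    calc 4 * x.bmod m ^ 2 = (2 * |x.bmod m|) ^ 2 := by rw [mul_pow, sq_abs]; norm_num
      _ ≤ _ := pow_le_pow_left₀ (by positivity) (Int.two_mul_abs_bmod_le hm x) 2
  rw [normSq_def', ← coe_natCast (R := ℤ), coe_mul_eq_smul]
  simp only [re_sub, imI_sub, imJ_sub, imK_sub, re_smul, imI_smul, imJ_smul, imK_smul, smul_eq_mul]
  linarith [hsq Z.re, hsq Z.imI, hsq Z.imJ, hsq Z.imK]

theorem Quaternion.normSq_mul_normSq_sub_mul {R : Type*} [CommRing R] (X Y Q : ℍ[R]) :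
    normSq Y * normSq (X - Y * Q) = normSq (star Y * X - ((normSq Y : R) : ℍ[R]) * Q) := by
  rw [← star_mul_self, mul_assoc, ← mul_sub, map_mul, normSq_star]

theorem lipschitz_quaternion_div_with_remainder_general (X Y : Quaternion ℤ)
    (hodd : Odd (Quaternion.normSq Y)) :
    ∃ Q : Quaternion ℤ, Quaternion.normSq (X - Y * Q) < Quaternion.normSq Y := by
  obtain ⟨m, hm⟩ := Int.eq_ofNat_of_zero_le (normSq_nonneg (a := Y))
  rw [hm, Int.odd_coe_nat] at hodd
  obtain ⟨Q, hQ⟩ := exists_normSq_sub_natCast_mul_le hodd (star Y * X)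
  refine ⟨Q, ?_⟩
  have hpos : (0 : ℤ) < m := by exact_mod_cast hodd.pos
  rw [hm]
  refine lt_of_mul_lt_mul_left ?_ hpos.le
  calc (m : ℤ) * normSq (X - Y * Q) = normSq (star Y * X - (m : ℍ[ℤ]) * Q) := by
        rw [← coe_natCast, ← hm, normSq_mul_normSq_sub_mul]
    _ ≤ ((m : ℤ) - 1) ^ 2 := hQ
    _ < m * m := by nlinarith

/-- One-sided division with remainder in the Lipschitz quaternions: if the divisor
has odd norm, a remainder of strictly smaller norm exists. -/
theorem lipschitz_quaternion_div_with_remainder (X Y : Quaternion ℤ) (hY : Y ≠ 0)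
    (hodd : Odd (Quaternion.normSq Y)) :
    ∃ Q : Quaternion ℤ, Quaternion.normSq (X - Y * Q) < Quaternion.normSq Y :=
  lipschitz_quaternion_div_with_remainder_general X Y hodd
end

section
/- In the Lipschitz quaternions Quaternion ℤ, let Y = 2 and Z = 1 + i + j + k. There is no X ∈ Quaternion ℤ such that X left-divides Y, X left-divides Z, and every W ∈ Quaternion ℤ which left-divides both Y and Z also left-divides X. (Here X left-divides A means there exists U ∈ Quaternion ℤ with A = X * U.) -/
/-!
Both `1 + i` and `1 + j` left-divide `2` and `1 + i + j + k`, so a greatest common left divisor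
`X` would be left-divisible by both. Left division by `1 + i` pairs the coordinates of `X` as
`(re, i)`, `(j, k)` with equal parities, and left division by `1 + j` pairs them as `(re, j)`,
`(i, k)`; hence all four coordinates of `X` have one parity. If they are even,
`2 ∣ X ∣ 1 + i + j + k`, which is impossible. If they are odd, `4 ∣ normSq X`, whereas
`2 = X * U` gives `star X * 2 = normSq X * U`, so `normSq X ∣ 2 * X.re` with `X.re` odd.
-/

namespace Quaternion

section CommRing

variable {R : Type*} [CommRing R]

theorem coe_dvd_iff (r : R) (x : ℍ[R]) :
    (r : ℍ[R]) ∣ x ↔ r ∣ x.re ∧ r ∣ x.imI ∧ r ∣ x.imJ ∧ r ∣ x.imK := by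
  constructor
  · rintro ⟨y, rfl⟩
    simp [coe_mul_eq_smul]
  · rintro ⟨⟨a, ha⟩, ⟨b, hb⟩, ⟨c, hc⟩, ⟨d, hd⟩⟩
    -- an anonymous constructor would be typed `QuaternionAlgebra`, where the `ℍ` simp lemmas fail
    obtain ⟨y, rfl, rfl, rfl, rfl⟩ :
        ∃ y : ℍ[R], y.re = a ∧ y.imI = b ∧ y.imJ = c ∧ y.imK = d :=
      ⟨⟨a, b, c, d⟩, rfl, rfl, rfl, rfl⟩
    exact ⟨y, by ext <;> simp [ha, hb, hc, hd]⟩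

theorem normSq_dvd_mul_re_of_dvd_coe {r : R} {x : ℍ[R]} (h : x ∣ (r : ℍ[R])) :
    normSq x ∣ r * x.re := by
  obtain ⟨u, hu⟩ := h
  have hstar : star x * r = normSq x * u := by rw [hu, ← mul_assoc, star_mul_self]
  exact ⟨u.re, by simpa [mul_comm] using congrArg QuaternionAlgebra.re hstar⟩

end CommRing

theorem modEq_of_one_add_i_dvd {x : ℍ[ℤ]} (h : (⟨1, 1, 0, 0⟩ : ℍ[ℤ]) ∣ x) :
    x.re ≡ x.imI [ZMOD 2] ∧ x.imJ ≡ x.imK [ZMOD 2] := by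
  obtain ⟨a, rfl⟩ := h
  simp only [QuaternionAlgebra.re_mul, QuaternionAlgebra.imI_mul, QuaternionAlgebra.imJ_mul,
    QuaternionAlgebra.imK_mul, Int.ModEq]
  omega

theorem modEq_of_one_add_j_dvd {x : ℍ[ℤ]} (h : (⟨1, 0, 1, 0⟩ : ℍ[ℤ]) ∣ x) :
    x.re ≡ x.imJ [ZMOD 2] ∧ x.imI ≡ x.imK [ZMOD 2] := by
  obtain ⟨a, rfl⟩ := h
  simp only [QuaternionAlgebra.re_mul, QuaternionAlgebra.imI_mul, QuaternionAlgebra.imJ_mul,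
    QuaternionAlgebra.imK_mul, Int.ModEq]
  omega

theorem even_or_odd_of_one_add_i_dvd_of_one_add_j_dvd {x : ℍ[ℤ]}
    (hi : (⟨1, 1, 0, 0⟩ : ℍ[ℤ]) ∣ x) (hj : (⟨1, 0, 1, 0⟩ : ℍ[ℤ]) ∣ x) :
    (Even x.re ∧ Even x.imI ∧ Even x.imJ ∧ Even x.imK) ∨
      (Odd x.re ∧ Odd x.imI ∧ Odd x.imJ ∧ Odd x.imK) := by
  have := modEq_of_one_add_i_dvd hi
  have := modEq_of_one_add_j_dvd hj
  simp only [Int.ModEq, Int.even_iff, Int.odd_iff] at *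
  omega

theorem four_dvd_normSq_of_odd {x : ℍ[ℤ]}
    (h : Odd x.re ∧ Odd x.imI ∧ Odd x.imJ ∧ Odd x.imK) : 4 ∣ normSq x := by
  obtain ⟨h0, h1, h2, h3⟩ := h
  have := Int.sq_mod_four_eq_one_of_odd h0
  have := Int.sq_mod_four_eq_one_of_odd h1
  have := Int.sq_mod_four_eq_one_of_odd h2
  have := Int.sq_mod_four_eq_one_of_odd h3
  rw [normSq_def']
  omega

end Quaternion

/-- In the Lipschitz quaternions, `Y = 2` and `Z = 1 + i + j + k` have no greatest
common left divisor. -/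
theorem no_gcd_left_two_and_one_i_j_k :
    ¬ ∃ X : Quaternion ℤ,
      (∃ U : Quaternion ℤ, (2 : Quaternion ℤ) = X * U) ∧
      (∃ U : Quaternion ℤ, (⟨1, 1, 1, 1⟩ : Quaternion ℤ) = X * U) ∧
      (∀ W : Quaternion ℤ,
        (∃ U : Quaternion ℤ, (2 : Quaternion ℤ) = W * U) →
        (∃ U : Quaternion ℤ, (⟨1, 1, 1, 1⟩ : Quaternion ℤ) = W * U) →
        ∃ U : Quaternion ℤ, X = W * U) := by
  rintro ⟨X, hX2, hXk, hmax⟩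
  -- in a noncommutative monoid `a ∣ b` unfolds to `∃ c, b = a * c`, i.e. left divisibility
  have hi : (⟨1, 1, 0, 0⟩ : Quaternion ℤ) ∣ X :=
    hmax _ ⟨⟨1, -1, 0, 0⟩, by ext <;> rfl⟩ ⟨⟨1, 0, 1, 0⟩, by ext <;> rfl⟩
  have hj : (⟨1, 0, 1, 0⟩ : Quaternion ℤ) ∣ X :=
    hmax _ ⟨⟨1, 0, -1, 0⟩, by ext <;> rfl⟩ ⟨⟨1, 0, 0, 1⟩, by ext <;> rfl⟩
  rcases Quaternion.even_or_odd_of_one_add_i_dvd_of_one_add_j_dvd hi hj with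
    ⟨h0, h1, h2, h3⟩ | hodd
  · have h2X : ((2 : ℤ) : Quaternion ℤ) ∣ X :=
      (Quaternion.coe_dvd_iff 2 X).2 ⟨h0.two_dvd, h1.two_dvd, h2.two_dvd, h3.two_dvd⟩
    have : (2 : ℤ) ∣ 1 := ((Quaternion.coe_dvd_iff 2 _).1 (h2X.trans hXk)).1
    omega
  · have h4 : (4 : ℤ) ∣ 2 * X.re :=
      (Quaternion.four_dvd_normSq_of_odd hodd).trans
        (Quaternion.normSq_dvd_mul_re_of_dvd_coe (r := 2) hX2)
    obtain ⟨t, ht⟩ := hodd.1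
    omega
end

section
/- Let X be a Lipschitz quaternion which is primitive (the gcd of its four integer components is 1) and whose norm normSq X is odd, and let p be a prime number dividing normSq X. Then there exists Y ∈ Quaternion ℤ with normSq Y = p such that Y left-divides X (i.e. ∃ U, X = Y * U); moreover if Y and Y' both have norm p and both left-divide X, then there exists a unit quaternion E ∈ {±1, ±i, ±j, ±k} with Y' = Y * E. -/
/-!
Fix an odd prime `p` and a Lipschitz quaternion `X` with `p ∣ N(X)` and `p ∤ X`. The quaternions
`Y` with `p ∣ Ȳ X` form a right ideal `S`, all of whose norms are divisible by `p` (multiply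
`Ȳ X ≡ 0` on the left by `Y`), and a left divisor of `X` of norm `p` is the same as an element of
`S` of norm `p`.

Existence is Lagrange's descent. Reducing `X` modulo `p` to balanced residues gives an element of
`S` of norm `p n` with `0 < n < p`. While `n > 1`, reduce `Y = n Q + R` modulo `n` if `n` is odd,
so that `Y R̄ = n Y'`, or find `u` of norm `2` with `Y u = 2 Y'` if `n` is even; either way `Y'`
lies in `S` and has smaller positive norm.

Uniqueness: if `N(Y) = p` and `Z ∈ S`, reduce `Ȳ Z = p Q + R` modulo `p`. Then `D = Z - Y Q ∈ S`
and `p N(D) = N(R) < p²`, while `p ∣ N(D)`; so `D = 0` and `Y ∣ Z`. When `N(Z) = p` as well, the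
cofactor has norm `1`, so it is one of `±1, ±i, ±j, ±k`.
-/

open Quaternion

namespace Quaternion

theorem intCast_dvd_iff {m : ℤ} {Z : ℍ[ℤ]} :
    (m : ℍ[ℤ]) ∣ Z ↔ m ∣ Z.re ∧ m ∣ Z.imI ∧ m ∣ Z.imJ ∧ m ∣ Z.imK := by
  constructor
  · rintro ⟨W, rfl⟩
    simp
  · rintro ⟨⟨a, ha⟩, ⟨b, hb⟩, ⟨c, hc⟩, ⟨d, hd⟩⟩
    -- `⟨a, b, c, d⟩` elaborates at type `QuaternionAlgebra ℤ (-1) 0 (-1)`, out of reach of the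
    -- `Quaternion` simp lemmas, so it is only used through a name of type `ℍ[ℤ]`
    obtain ⟨W, rfl, rfl, rfl, rfl⟩ : ∃ W : ℍ[ℤ], W.re = a ∧ W.imI = b ∧ W.imJ = c ∧ W.imK = d :=
      ⟨⟨a, b, c, d⟩, rfl, rfl, rfl, rfl⟩
    exact ⟨W, by ext <;> simp [ha, hb, hc, hd]⟩

theorem intCast_dvd_mul_of_dvd_right {m : ℤ} {Z : ℍ[ℤ]} (h : (m : ℍ[ℤ]) ∣ Z) (C : ℍ[ℤ]) :
    (m : ℍ[ℤ]) ∣ C * Z := by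
  obtain ⟨W, rfl⟩ := h
  exact ⟨C * W, by rw [← mul_assoc, ← Int.cast_comm, mul_assoc]⟩

theorem intCast_dvd_of_dvd_intCast_mul {p k : ℤ} (hp : Prime p) (hk : ¬ p ∣ k) {Z : ℍ[ℤ]}
    (h : (p : ℍ[ℤ]) ∣ k * Z) : (p : ℍ[ℤ]) ∣ Z := by
  simp only [intCast_dvd_iff, re_mul, imI_mul, imJ_mul, imK_mul, re_intCast, imI_intCast,
    imJ_intCast, imK_intCast, zero_mul, sub_zero, add_zero, Int.cast_id, hp.dvd_mul, hk,
    false_or] at h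
  exact intCast_dvd_iff.2 h

theorem exists_eq_intCast_mul_add_normSq_le {m : ℤ} (hm : Odd m) (hm0 : 0 < m) (Y : ℍ[ℤ]) :
    ∃ Q R : ℍ[ℤ], Y = m * Q + R ∧ normSq R ≤ (m - 1) ^ 2 := by
  lift m to ℕ using hm0.le
  -- balanced residues: for odd `m` every `bmod` lies in `[-(m-1)/2, (m-1)/2]`
  have hbmod (x : ℤ) : 4 * x.bmod m ^ 2 ≤ (m - 1) ^ 2 := by
    have h₁ := Int.le_bmod (x := x) (m := m) (by omega)
    have h₂ := Int.bmod_le (x := x) (m := m) (by omega)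
    obtain ⟨k, hk⟩ := hm
    have : (m : ℤ) / 2 = k := by omega
    have : ((m : ℤ) - 1) / 2 = k := by omega
    nlinarith
  obtain ⟨R, hre, himI, himJ, himK⟩ : ∃ R : ℍ[ℤ], R.re = Y.re.bmod m ∧ R.imI = Y.imI.bmod m ∧
      R.imJ = Y.imJ.bmod m ∧ R.imK = Y.imK.bmod m := ⟨⟨_, _, _, _⟩, rfl, rfl, rfl, rfl⟩
  have hsub (x : ℤ) : (m : ℤ) ∣ x - x.bmod m := ⟨x.bdiv m, by linarith [Int.bdiv_add_bmod x m]⟩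
  obtain ⟨Q, hQ⟩ : ((m : ℤ) : ℍ[ℤ]) ∣ Y - R := by
    rw [intCast_dvd_iff, re_sub, imI_sub, imJ_sub, imK_sub, hre, himI, himJ, himK]
    exact ⟨hsub Y.re, hsub Y.imI, hsub Y.imJ, hsub Y.imK⟩
  refine ⟨Q, R, by rw [← hQ, sub_add_cancel], ?_⟩
  rw [normSq_def', hre, himI, himJ, himK]
  linarith [hbmod Y.re, hbmod Y.imI, hbmod Y.imJ, hbmod Y.imK]

theorem dvd_normSq_intCast_mul_add_sub (m : ℤ) (Q R : ℍ[ℤ]) :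
    m ∣ normSq ((m : ℍ[ℤ]) * Q + R) - normSq R := by
  refine ⟨m * normSq Q + 2 * (Q.re * R.re + Q.imI * R.imI + Q.imJ * R.imJ + Q.imK * R.imK), ?_⟩
  simp only [normSq_def', re_add, imI_add, imJ_add, imK_add, re_mul, imI_mul, imJ_mul,
    imK_mul, re_intCast, imI_intCast, imJ_intCast, imK_intCast, Int.cast_id]
  ring

theorem self_mul_star_eq_intCast (a : ℍ[ℤ]) : a * star a = ((normSq a : ℤ) : ℍ[ℤ]) :=
  self_mul_star a

theorem star_mul_self_eq_intCast (a : ℍ[ℤ]) : star a * a = ((normSq a : ℤ) : ℍ[ℤ]) :=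
  star_mul_self a

theorem intCast_dvd_star_mul_self {m : ℤ} {X : ℍ[ℤ]} (h : m ∣ normSq X) :
    (m : ℍ[ℤ]) ∣ star X * X := by
  rw [star_mul_self_eq_intCast]
  exact Int.cast_dvd_cast _ _ h

theorem intCast_dvd_star_mul_of_dvd {m : ℤ} {X Y : ℍ[ℤ]} (hY : normSq Y = m) (h : Y ∣ X) :
    (m : ℍ[ℤ]) ∣ star Y * X := by
  obtain ⟨U, rfl⟩ := h
  rw [← mul_assoc, star_mul_self_eq_intCast, hY]
  exact dvd_mul_right _ _

theorem not_intCast_dvd_of_gcd_eq_one {p : ℤ} (hp : ¬ IsUnit p) {X : ℍ[ℤ]}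
    (hX : Int.gcd (Int.gcd (Int.gcd X.re X.imI) X.imJ) X.imK = 1) : ¬ (p : ℍ[ℤ]) ∣ X := by
  intro h
  obtain ⟨h₁, h₂, h₃, h₄⟩ := intCast_dvd_iff.1 h
  have := Int.dvd_coe_gcd (Int.dvd_coe_gcd (Int.dvd_coe_gcd h₁ h₂) h₃) h₄
  rw [hX, Nat.cast_one] at this
  exact hp (isUnit_of_dvd_one this)

theorem dvd_normSq_of_intCast_dvd_star_mul {p : ℤ} (hp : Prime p) {X R : ℍ[ℤ]}
    (hX : ¬ (p : ℍ[ℤ]) ∣ X) (h : (p : ℍ[ℤ]) ∣ star R * X) : p ∣ normSq R := by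
  by_contra hR
  refine hX (intCast_dvd_of_dvd_intCast_mul hp hR ?_)
  rw [← self_mul_star_eq_intCast, mul_assoc]
  exact intCast_dvd_mul_of_dvd_right h R

theorem exists_normSq_eq_two_and_two_dvd_mul {Y : ℍ[ℤ]} (h : Even (normSq Y)) :
    ∃ u : ℍ[ℤ], normSq u = 2 ∧ ((2 : ℤ) : ℍ[ℤ]) ∣ Y * u := by
  rw [normSq_def'] at h
  have hsum : Even (Y.re + Y.imI + Y.imJ + Y.imK) := by simpa [parity_simps] using h
  rw [Int.even_iff] at hsum
  -- `u = 1 - e` for the `e ∈ {i, j, k}` pairing `Y.re` with a coordinate of the same parity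
  obtain ⟨u, hu⟩ : ∃ u : ℍ[ℤ],
      (u.re = 1 ∧ u.imI = -1 ∧ u.imJ = 0 ∧ u.imK = 0 ∧ (Y.re - Y.imI) % 2 = 0) ∨
      (u.re = 1 ∧ u.imI = 0 ∧ u.imJ = -1 ∧ u.imK = 0 ∧ (Y.re - Y.imJ) % 2 = 0) ∨
      (u.re = 1 ∧ u.imI = 0 ∧ u.imJ = 0 ∧ u.imK = -1 ∧ (Y.re - Y.imK) % 2 = 0) := by
    rcases (by omega : (Y.re - Y.imI) % 2 = 0 ∨ (Y.re - Y.imJ) % 2 = 0 ∨ (Y.re - Y.imK) % 2 = 0)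
      with h | h | h
    exacts [⟨⟨1, -1, 0, 0⟩, .inl ⟨rfl, rfl, rfl, rfl, h⟩⟩,
      ⟨⟨1, 0, -1, 0⟩, .inr (.inl ⟨rfl, rfl, rfl, rfl, h⟩)⟩,
      ⟨⟨1, 0, 0, -1⟩, .inr (.inr ⟨rfl, rfl, rfl, rfl, h⟩)⟩]
  refine ⟨u, ?_, intCast_dvd_iff.2 ?_⟩ <;>
    rcases hu with ⟨h₁, h₂, h₃, h₄, h⟩ | ⟨h₁, h₂, h₃, h₄, h⟩ | ⟨h₁, h₂, h₃, h₄, h⟩ <;>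
    simp [normSq_def', h₁, h₂, h₃, h₄] <;> omega

theorem exists_mul_star_eq_intCast_mul {m : ℤ} (hm : Odd m) (hm0 : 0 < m) {Y : ℍ[ℤ]}
    (hmY : m ∣ normSq Y) (hY : ¬ (m : ℍ[ℤ]) ∣ Y) :
    ∃ R Y' : ℍ[ℤ], Y * star R = m * Y' ∧ 0 < normSq R ∧ normSq R < m ^ 2 := by
  obtain ⟨Q, R, rfl, hR⟩ := exists_eq_intCast_mul_add_normSq_le hm hm0 Y
  have hR0 : R ≠ 0 := by
    rintro rfl
    exact hY ⟨Q, add_zero _⟩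
  obtain ⟨w, hw⟩ : m ∣ normSq R := (dvd_sub_right hmY).1 (dvd_normSq_intCast_mul_add_sub m Q R)
  refine ⟨R, Q * star R + w, ?_, lt_of_not_ge (mt normSq_le_zero.1 hR0), by nlinarith⟩
  rw [add_mul, mul_assoc, self_mul_star_eq_intCast, hw, Int.cast_mul, mul_add]

theorem exists_mul_eq_intCast_mul_normSq_lt {p n : ℤ} (hp : Prime p) (hp_odd : Odd p)
    {Y : ℍ[ℤ]} (hY : normSq Y = p * n) (hn : 1 < n) (hnp : n < p) :
    ∃ (V Y' : ℍ[ℤ]) (k : ℤ), Y * V = k * Y' ∧ ¬ p ∣ k ∧ 0 < normSq V ∧ normSq V < k ^ 2 := by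
  rcases n.even_or_odd with hn_even | hn_odd
  · obtain ⟨u, hu, Y', hY'⟩ := exists_normSq_eq_two_and_two_dvd_mul (hY ▸ hn_even.mul_left p)
    have hp2 : ¬ p ∣ 2 := fun h => by
      have := Int.le_of_dvd two_pos h
      obtain ⟨k, rfl⟩ := hp_odd
      omega
    exact ⟨u, Y', 2, hY', hp2, by omega, by omega⟩
  · have hnY : ¬ (n : ℍ[ℤ]) ∣ Y := by
      rintro ⟨Z, rfl⟩
      have hpn : p = n * normSq Z := by
        rw [map_mul, normSq_intCast, Int.cast_id] at hY
        exact mul_right_cancel₀ (by omega : n ≠ 0) (by linarith : p * n = n * normSq Z * n)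
      rcases hp.irreducible.isUnit_or_isUnit hpn with h | h <;>
        rcases Int.isUnit_iff.1 h with h | h <;> rw [h] at hpn <;> omega
    obtain ⟨R, Y', hRY, hR⟩ :=
      exists_mul_star_eq_intCast_mul hn_odd (by omega) ⟨p, by rw [hY, mul_comm]⟩ hnY
    have hpn : ¬ p ∣ n := fun h => by linarith [Int.le_of_dvd (by omega) h]
    exact ⟨star R, Y', n, hRY, hpn, by rwa [normSq_star]⟩

theorem intCast_dvd_star_mul_of_mul_eq {p k : ℤ} (hp : Prime p) (hk : ¬ p ∣ k)
    {X Y V Y' : ℍ[ℤ]} (hYX : (p : ℍ[ℤ]) ∣ star Y * X) (hVY : Y * V = k * Y') :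
    (p : ℍ[ℤ]) ∣ star Y' * X := by
  refine intCast_dvd_of_dvd_intCast_mul hp hk ?_
  have := intCast_dvd_mul_of_dvd_right hYX (star V)
  rwa [← mul_assoc, ← star_mul, hVY, star_mul, star_intCast, ← Int.cast_comm, mul_assoc] at this

theorem intCast_dvd_star_sub_mul_mul {p : ℤ} {X A B : ℍ[ℤ]} (hA : (p : ℍ[ℤ]) ∣ star A * X)
    (hB : (p : ℍ[ℤ]) ∣ star B * X) (C : ℍ[ℤ]) : (p : ℍ[ℤ]) ∣ star (A - B * C) * X := by
  rw [star_sub, star_mul, sub_mul, mul_assoc]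
  exact dvd_sub hA (intCast_dvd_mul_of_dvd_right hB _)

theorem exists_intCast_dvd_star_mul_normSq_lt_sq {p : ℤ} (hp_odd : Odd p) (hp0 : 0 < p)
    {X : ℍ[ℤ]} (hX : ¬ (p : ℍ[ℤ]) ∣ X) (hpX : p ∣ normSq X) :
    ∃ Y : ℍ[ℤ], (p : ℍ[ℤ]) ∣ star Y * X ∧ 0 < normSq Y ∧ normSq Y < p ^ 2 := by
  obtain ⟨Q, R, hQR, hR⟩ := exists_eq_intCast_mul_add_normSq_le hp_odd hp0 X
  have hR0 : R ≠ 0 := by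
    rintro rfl
    exact hX ⟨Q, by rw [hQR, add_zero]⟩
  have hpp : (p : ℍ[ℤ]) ∣ star (p : ℍ[ℤ]) * X := by
    rw [star_intCast]
    exact dvd_mul_right _ _
  refine ⟨R, ?_, lt_of_not_ge (mt normSq_le_zero.1 hR0), by nlinarith⟩
  simpa [hQR] using intCast_dvd_star_sub_mul_mul (intCast_dvd_star_mul_self hpX) hpp Q

theorem exists_normSq_eq_of_intCast_dvd_star_mul {p : ℤ} (hp : Prime p) (hp_odd : Odd p)
    (hp0 : 0 < p) {X : ℍ[ℤ]} (hX : ¬ (p : ℍ[ℤ]) ∣ X) (Y : ℍ[ℤ])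
    (hYX : (p : ℍ[ℤ]) ∣ star Y * X) (hY0 : 0 < normSq Y) (hYp : normSq Y < p ^ 2) :
    ∃ Y₀ : ℍ[ℤ], (p : ℍ[ℤ]) ∣ star Y₀ * X ∧ normSq Y₀ = p := by
  obtain ⟨n, hn⟩ := dvd_normSq_of_intCast_dvd_star_mul hp hX hYX
  by_cases hn1 : n = 1
  · exact ⟨Y, hYX, by rw [hn, hn1, mul_one]⟩
  have hn0 : 0 < n := pos_of_mul_pos_right (hn ▸ hY0) hp0.le
  obtain ⟨V, Y', k, hVY, hk, hV0, hVk⟩ :=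
    exists_mul_eq_intCast_mul_normSq_lt hp hp_odd hn (by omega) (by nlinarith)
  have hnorm : normSq Y * normSq V = k ^ 2 * normSq Y' := by
    rw [← map_mul, hVY, map_mul, normSq_intCast, Int.cast_id]
  have hY'0 : 0 < normSq Y' := by nlinarith
  have hY'Y : normSq Y' < normSq Y := by nlinarith
  exact exists_normSq_eq_of_intCast_dvd_star_mul hp hp_odd hp0 hX Y'
    (intCast_dvd_star_mul_of_mul_eq hp hk hYX hVY) hY'0 (hY'Y.trans hYp)
termination_by (normSq Y).toNat
decreasing_by omega

theorem dvd_of_intCast_dvd_star_mul {p : ℤ} (hp : Prime p) (hp_odd : Odd p) (hp0 : 0 < p)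
    {X Y Z : ℍ[ℤ]} (hX : ¬ (p : ℍ[ℤ]) ∣ X) (hY : normSq Y = p)
    (hYX : (p : ℍ[ℤ]) ∣ star Y * X) (hZX : (p : ℍ[ℤ]) ∣ star Z * X) : Y ∣ Z := by
  obtain ⟨Q, R, hQR, hR⟩ := exists_eq_intCast_mul_add_normSq_le hp_odd hp0 (star Y * Z)
  have hD : star Y * (Z - Y * Q) = R := by
    rw [mul_sub, ← mul_assoc, star_mul_self_eq_intCast, hY, hQR, add_sub_cancel_left]
  obtain ⟨t, ht⟩ :=
    dvd_normSq_of_intCast_dvd_star_mul hp hX (intCast_dvd_star_sub_mul_mul hZX hYX Q)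
  have hRD : normSq R = p * normSq (Z - Y * Q) := by rw [← hD, map_mul, normSq_star, hY]
  have ht0 : t = 0 := by nlinarith [mul_pos hp0 hp0, normSq_nonneg (a := Z - Y * Q)]
  rw [ht0, mul_zero, normSq_eq_zero, sub_eq_zero] at ht
  exact ⟨Q, ht⟩

theorem mem_units_of_normSq_eq_one {E : ℍ[ℤ]} (h : normSq E = 1) :
    E ∈ ({1, -1, ⟨0, 1, 0, 0⟩, ⟨0, -1, 0, 0⟩, ⟨0, 0, 1, 0⟩, ⟨0, 0, -1, 0⟩,
      ⟨0, 0, 0, 1⟩, ⟨0, 0, 0, -1⟩} : Set ℍ[ℤ]) := by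
  rw [normSq_def'] at h
  obtain ⟨a, b, c, d⟩ := E
  obtain ⟨ha₁, ha₂⟩ : -1 ≤ a ∧ a ≤ 1 := ⟨by nlinarith, by nlinarith⟩
  obtain ⟨hb₁, hb₂⟩ : -1 ≤ b ∧ b ≤ 1 := ⟨by nlinarith, by nlinarith⟩
  obtain ⟨hc₁, hc₂⟩ : -1 ≤ c ∧ c ≤ 1 := ⟨by nlinarith, by nlinarith⟩
  obtain ⟨hd₁, hd₂⟩ : -1 ≤ d ∧ d ≤ 1 := ⟨by nlinarith, by nlinarith⟩
  interval_cases a <;> interval_cases b <;> interval_cases c <;> interval_cases d <;>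
    first | (norm_num at h; done) | tauto

end Quaternion

/-- An odd primitive Lipschitz quaternion has a left divisor of norm `p` for every
prime `p` dividing its norm, unique modulo right association by a unit
quaternion `±1, ±i, ±j, ±k`. -/
theorem lipschitz_quaternion_prime_left_factor (X : Quaternion ℤ)
    (hprim : Int.gcd (Int.gcd (Int.gcd X.re X.imI) X.imJ) X.imK = 1)
    (hodd : Odd (Quaternion.normSq X))
    (p : ℕ) (hp : Nat.Prime p) (hdvd : (p : ℤ) ∣ Quaternion.normSq X) :
    (∃ Y : Quaternion ℤ, Quaternion.normSq Y = (p : ℤ) ∧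
        ∃ U : Quaternion ℤ, X = Y * U) ∧
    (∀ Y Y' : Quaternion ℤ,
      Quaternion.normSq Y = (p : ℤ) → (∃ U : Quaternion ℤ, X = Y * U) →
      Quaternion.normSq Y' = (p : ℤ) → (∃ U : Quaternion ℤ, X = Y' * U) →
      ∃ E ∈ ({1, -1, ⟨0,1,0,0⟩, ⟨0,-1,0,0⟩, ⟨0,0,1,0⟩, ⟨0,0,-1,0⟩,
              ⟨0,0,0,1⟩, ⟨0,0,0,-1⟩} : Set (Quaternion ℤ)),
        Y' = Y * E) := by
  have hp' : Prime (p : ℤ) := Nat.prime_iff_prime_int.mp hp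
  have hp0 : (0 : ℤ) < p := by exact_mod_cast hp.pos
  have hp_odd : Odd (p : ℤ) := by
    obtain ⟨s, hs⟩ := hdvd
    exact (Int.odd_mul.1 (hs ▸ hodd)).1
  have hX := not_intCast_dvd_of_gcd_eq_one hp'.not_isUnit hprim
  obtain ⟨Y₁, hY₁X, hY₁0, hY₁p⟩ := exists_intCast_dvd_star_mul_normSq_lt_sq hp_odd hp0 hX hdvd
  obtain ⟨Y₀, hY₀X, hY₀⟩ :=
    exists_normSq_eq_of_intCast_dvd_star_mul hp' hp_odd hp0 hX Y₁ hY₁X hY₁0 hY₁p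
  refine ⟨⟨Y₀, hY₀, dvd_of_intCast_dvd_star_mul hp' hp_odd hp0 hX hY₀ hY₀X
    (intCast_dvd_star_mul_self hdvd)⟩, ?_⟩
  intro Y Y' hY hYX hY' hY'X
  obtain ⟨E, rfl⟩ := dvd_of_intCast_dvd_star_mul hp' hp_odd hp0 hX hY
    (intCast_dvd_star_mul_of_dvd hY hYX) (intCast_dvd_star_mul_of_dvd hY' hY'X)
  refine ⟨E, mem_units_of_normSq_eq_one ?_, rfl⟩
  rw [map_mul, hY] at hY'
  exact (mul_right_eq_self₀.1 hY').resolve_right hp0.ne'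
end

section
/- Let s be an odd positive integer and let S = s + x·i + y·j + z·k be a primitive Lipschitz quaternion (gcd(s, x, y, z) = 1) with s^2 dividing normSq S. Then there exists X ∈ Quaternion ℤ with normSq X = s such that: (i) there exists S' ∈ Quaternion ℤ with S'.re = 1 and star X * S * X = (s^2 : ℤ) • S'; and (ii) for every Q ∈ Quaternion ℤ with Q.re = 1 such that s^2 divides normSq ((s : ℤ) • Q − S), there exists Q' ∈ Quaternion ℤ with Q'.re = 1 and star X * Q * X = (s : ℤ) • Q'. -/
/-!
The right ideal `S·H + s·H` of the Hurwitz order `H` is principal, since `H` is right Euclidean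
for the norm; let `g` generate it. Expanding `N(Sγ + sδ)` and using `s² ∣ N(S)` shows `s ∣ N(g)`,
while `N(g) ∣ N(s) = s²`; the cofactor `t = N(g)/s` then divides `S` in `H`, so `t = 1` because
`S` is primitive and `s` is odd. Multiplying `g` by a unit of `H` gives a Lipschitz `X` with
`N(X) = s`, `X̄S = sA` and `X = Sα + sβ` (clearing the denominator `2` against the odd `s`).

For such `X`, `X̄PX = X̄PSα + sX̄Pβ` is divisible by `s²` as soon as `s ∣ X̄P` and `s² ∣ X̄PS`.
This holds for `P = S` by `S² = 2sS - N(S)`, and for the pure quaternion `R = sQ - S` by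
`R² = -N(R)`; so `s² ∣ X̄(sQ)X`. Finally `Re(X̄PX) = N(X) Re(P)` pins the real parts to `1`.
-/

open Quaternion

lemma Int.exists_sq_eq_one_add_four_mul {a : ℤ} (ha : Odd a) :
    ∃ e m : ℤ, e ^ 2 = 1 ∧ a = e + 4 * m := by
  obtain ⟨k, rfl⟩ := ha
  obtain ⟨j, rfl | rfl⟩ := Int.even_or_odd' k
  · exact ⟨1, j, by norm_num, by ring⟩
  · exact ⟨-1, j + 1, by norm_num, by ring⟩

lemma sq_sub_round_add_sq_sub_round_sub_half_le {α : Type*} [Field α] [LinearOrder α]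
    [IsStrictOrderedRing α] [FloorRing α] (x : α) :
    (x - round x) ^ 2 + (x - 1 / 2 - round (x - 1 / 2)) ^ 2 ≤ 1 / 4 := by
  set r := x - round x
  have hr := abs_sub_round x
  have h₁ : (x - 1 / 2 - round (x - 1 / 2)) ^ 2 ≤ (r - 1 / 2) ^ 2 := by
    rw [sq_le_sq]
    convert round_le (x - 1 / 2) (round x) using 2
    ring
  have h₂ : (x - 1 / 2 - round (x - 1 / 2)) ^ 2 ≤ (r + 1 / 2) ^ 2 := by
    rw [sq_le_sq]
    convert round_le (x - 1 / 2) (round x - 1) using 2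
    push_cast; ring
  rcases abs_le.1 hr with ⟨hr₁, hr₂⟩
  rcases le_total 0 r with h | h <;> nlinarith

namespace Quaternion

/-- An anonymous constructor `⟨a, b, c, d⟩` elaborates at type `ℍ[R,-1,0,-1]`, where the simp
lemmas about `ℍ[R]` do not fire. -/
def ofCoords {R : Type*} [CommRing R] (a b c d : R) : ℍ[R] := ⟨a, b, c, d⟩

section
variable {R : Type*} [CommRing R] (a b c d : R)
@[simp] lemma ofCoords_re : (ofCoords a b c d).re = a := rfl
@[simp] lemma ofCoords_imI : (ofCoords a b c d).imI = b := rfl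
@[simp] lemma ofCoords_imJ : (ofCoords a b c d).imJ = c := rfl
@[simp] lemma ofCoords_imK : (ofCoords a b c d).imK = d := rfl
end

lemma re_star_mul_mul {R : Type*} [CommRing R] (X P : ℍ[R]) :
    (star X * P * X).re = normSq X * P.re := by
  simp only [re_mul, imI_mul, imJ_mul, imK_mul, re_star, imI_star, imJ_star, imK_star, normSq_def']
  ring

lemma mul_self_eq_two_re_mul_sub_normSq {R : Type*} [CommRing R] (S : ℍ[R]) :
    S * S = ((2 * S.re : R) : ℍ[R]) * S - ((normSq S : R) : ℍ[R]) := by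
  rw [← star_mul_self, ← sub_mul, star_eq_two_re_sub, sub_sub_cancel]

lemma exists_eq_add_four_zsmul {a : ℍ[ℤ]} (h₀ : Odd a.re) (h₁ : Odd a.imI) (h₂ : Odd a.imJ)
    (h₃ : Odd a.imK) : ∃ e m : ℍ[ℤ], normSq e = 4 ∧ a = e + (4 : ℤ) • m := by
  obtain ⟨e₀, m₀, he₀, ha₀⟩ := Int.exists_sq_eq_one_add_four_mul h₀
  obtain ⟨e₁, m₁, he₁, ha₁⟩ := Int.exists_sq_eq_one_add_four_mul h₁
  obtain ⟨e₂, m₂, he₂, ha₂⟩ := Int.exists_sq_eq_one_add_four_mul h₂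
  obtain ⟨e₃, m₃, he₃, ha₃⟩ := Int.exists_sq_eq_one_add_four_mul h₃
  refine ⟨ofCoords e₀ e₁ e₂ e₃, ofCoords m₀ m₁ m₂ m₃, ?_, ?_⟩
  · rw [normSq_def']
    simp only [ofCoords_re, ofCoords_imI, ofCoords_imJ, ofCoords_imK, he₀, he₁, he₂, he₃]
    norm_num
  · ext <;> simp only [re_add, imI_add, imJ_add, imK_add, re_smul, imI_smul, imJ_smul, imK_smul,
      ofCoords_re, ofCoords_imI, ofCoords_imJ, ofCoords_imK, smul_eq_mul, ha₀, ha₁, ha₂, ha₃]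

lemma exists_eq_zsmul_of_two_zsmul_eq {t : ℤ} (ht : Odd t) {x w : ℍ[ℤ]}
    (h : (2 : ℤ) • x = t • w) : ∃ y, x = t • y := by
  obtain ⟨m, rfl⟩ := ht
  exact ⟨x - m • w, by linear_combination (norm := module) (-m) • h⟩

lemma exists_eq_mul_add_zsmul_of_two_zsmul_eq {s : ℤ} (hs : Odd s) {X S a b : ℍ[ℤ]}
    (h : (2 : ℤ) • X = S * a + s • b) : ∃ α β, X = S * α + s • β := by
  obtain ⟨m, rfl⟩ := hs
  refine ⟨-m • a, X - m • b, ?_⟩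
  rw [mul_smul_comm]
  linear_combination (norm := module) (-m) • h

lemma isUnit_of_eq_zsmul {S : ℍ[ℤ]}
    (hprim : Int.gcd (Int.gcd (Int.gcd S.re S.imI) S.imJ) S.imK = 1) {t : ℤ} {y : ℍ[ℤ]}
    (h : S = t • y) : IsUnit t := by
  have ht : t ∣ (Int.gcd (Int.gcd (Int.gcd S.re S.imI) S.imJ) S.imK : ℤ) := by
    refine Int.dvd_coe_gcd (Int.dvd_coe_gcd (Int.dvd_coe_gcd ?_ ?_) ?_) ?_ <;>
      exact Dvd.intro _ (by rw [h]; rfl)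
  rw [hprim, Nat.cast_one] at ht
  exact isUnit_of_dvd_one ht

end Quaternion

namespace Hurwitz

def ofInt : ℍ[ℤ] →+* ℍ[ℚ] where
  toFun q := ofCoords q.re q.imI q.imJ q.imK
  map_one' := by ext <;> simp
  map_mul' x y := by ext <;> simp [re_mul, imI_mul, imJ_mul, imK_mul]
  map_zero' := by ext <;> simp
  map_add' x y := by ext <;> simp

@[simp] lemma ofInt_re (q : ℍ[ℤ]) : (ofInt q).re = q.re := rfl
@[simp] lemma ofInt_imI (q : ℍ[ℤ]) : (ofInt q).imI = q.imI := rfl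
@[simp] lemma ofInt_imJ (q : ℍ[ℤ]) : (ofInt q).imJ = q.imJ := rfl
@[simp] lemma ofInt_imK (q : ℍ[ℤ]) : (ofInt q).imK = q.imK := rfl

lemma ofInt_injective : Function.Injective ofInt := fun a b h => by
  ext
  · simpa using congr_arg (·.re) h
  · simpa using congr_arg (·.imI) h
  · simpa using congr_arg (·.imJ) h
  · simpa using congr_arg (·.imK) h

@[simp] lemma ofInt_star (q : ℍ[ℤ]) : ofInt (star q) = star (ofInt q) := by
  ext <;> simp

@[simp] lemma normSq_ofInt (q : ℍ[ℤ]) : normSq (ofInt q) = normSq q := by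
  simp [normSq_def']

def omega : ℍ[ℚ] := ofCoords (1 / 2) (1 / 2) (1 / 2) (1 / 2)

@[simp] lemma omega_re : omega.re = 1 / 2 := rfl
@[simp] lemma omega_imI : omega.imI = 1 / 2 := rfl
@[simp] lemma omega_imJ : omega.imJ = 1 / 2 := rfl
@[simp] lemma omega_imK : omega.imK = 1 / 2 := rfl

lemma ofInt_mul_omega (w : ℍ[ℤ]) : ofInt w * omega =
    ofInt (ofCoords (-(w.imI + w.imJ + w.imK)) (-w.imK) (-w.imI) (-w.imJ)) +
      (w.re + w.imI + w.imJ + w.imK) • omega := by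
  ext <;> simp only [zsmul_eq_mul, re_mul, imI_mul, imJ_mul, imK_mul, re_add, imI_add, imJ_add,
    imK_add, re_intCast, imI_intCast, imJ_intCast, imK_intCast, ofInt_re, ofInt_imI, ofInt_imJ,
    ofInt_imK, ofCoords_re, ofCoords_imI, ofCoords_imJ, ofCoords_imK, omega_re, omega_imI,
    omega_imJ, omega_imK] <;> push_cast <;> ring

lemma omega_mul_ofInt (w : ℍ[ℤ]) : omega * ofInt w =
    ofInt (ofCoords (-(w.imI + w.imJ + w.imK)) (-w.imJ) (-w.imK) (-w.imI)) +
      (w.re + w.imI + w.imJ + w.imK) • omega := by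
  ext <;> simp only [zsmul_eq_mul, re_mul, imI_mul, imJ_mul, imK_mul, re_add, imI_add, imJ_add,
    imK_add, re_intCast, imI_intCast, imJ_intCast, imK_intCast, ofInt_re, ofInt_imI, ofInt_imJ,
    ofInt_imK, ofCoords_re, ofCoords_imI, ofCoords_imJ, ofCoords_imK, omega_re, omega_imI,
    omega_imJ, omega_imK] <;> push_cast <;> ring

lemma omega_mul_omega : omega * omega = omega - 1 := by
  ext <;> simp only [re_mul, imI_mul, imJ_mul, imK_mul, re_sub, imI_sub, imJ_sub, imK_sub, re_one,
    imI_one, imJ_one, imK_one, omega_re, omega_imI, omega_imJ, omega_imK] <;> norm_num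

lemma star_omega : star omega = 1 - omega := by
  ext <;> simp only [re_star, imI_star, imJ_star, imK_star, re_sub, imI_sub, imJ_sub, imK_sub,
    re_one, imI_one, imJ_one, imK_one, omega_re, omega_imI, omega_imJ, omega_imK] <;> norm_num

def order : Subring ℍ[ℚ] where
  carrier := {q | ∃ (w : ℍ[ℤ]) (n : ℤ), q = ofInt w + n • omega}
  one_mem' := ⟨1, 0, by simp⟩
  zero_mem' := ⟨0, 0, by simp⟩
  add_mem' := by
    rintro _ _ ⟨w, n, rfl⟩ ⟨v, m, rfl⟩
    exact ⟨w + v, n + m, by rw [map_add, add_smul]; abel⟩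
  neg_mem' := by
    rintro _ ⟨w, n, rfl⟩
    exact ⟨-w, -n, by rw [map_neg, neg_smul, neg_add]⟩
  mul_mem' := by
    rintro _ _ ⟨w, n, rfl⟩ ⟨v, m, rfl⟩
    refine ⟨w * v + m • ofCoords (-(w.imI + w.imJ + w.imK)) (-w.imK) (-w.imI) (-w.imJ) +
      n • ofCoords (-(v.imI + v.imJ + v.imK)) (-v.imJ) (-v.imK) (-v.imI) - (n * m) • 1,
      m * (w.re + w.imI + w.imJ + w.imK) + n * (v.re + v.imI + v.imJ + v.imK) + n * m, ?_⟩
    simp only [add_mul, mul_add, smul_mul_assoc, mul_smul_comm, ofInt_mul_omega, omega_mul_ofInt,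
      omega_mul_omega, map_add, map_sub, map_mul, map_zsmul, map_one]
    module

lemma ofInt_mem (w : ℍ[ℤ]) : ofInt w ∈ order := ⟨w, 0, by simp⟩

lemma omega_mem : omega ∈ order := ⟨0, 1, by simp⟩

lemma star_mem {q : ℍ[ℚ]} (hq : q ∈ order) : star q ∈ order := by
  obtain ⟨w, n, rfl⟩ := hq
  exact ⟨star w + n • 1, -n, by
    rw [star_add, star_zsmul, star_omega, map_add, map_zsmul, map_one, ofInt_star]; module⟩

lemma two_zsmul_omega : (2 : ℤ) • omega = ofInt (ofCoords 1 1 1 1) := by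
  ext <;> simp only [re_smul, imI_smul, imJ_smul, imK_smul, omega_re, omega_imI, omega_imJ,
    omega_imK, ofInt_re, ofInt_imI, ofInt_imJ, ofInt_imK, ofCoords_re, ofCoords_imI, ofCoords_imJ,
    ofCoords_imK] <;> norm_num

lemma exists_two_zsmul_eq_ofInt {q : ℍ[ℚ]} (hq : q ∈ order) : ∃ w, (2 : ℤ) • q = ofInt w := by
  obtain ⟨w, n, rfl⟩ := hq
  refine ⟨(2 : ℤ) • w + n • ofCoords 1 1 1 1, ?_⟩
  rw [smul_add, smul_comm, two_zsmul_omega]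
  simp only [map_add, map_zsmul]

lemma exists_normSq_eq_natCast {q : ℍ[ℚ]} (hq : q ∈ order) : ∃ k : ℕ, normSq q = k := by
  obtain ⟨w, n, rfl⟩ := hq
  set m : ℤ := normSq w + n * (w.re + w.imI + w.imJ + w.imK) + n ^ 2
  have hm : normSq (ofInt w + n • omega) = m := by
    simp only [m, normSq_def', zsmul_eq_mul, re_mul, imI_mul, imJ_mul, imK_mul, re_add, imI_add,
      imJ_add, imK_add, re_intCast, imI_intCast, imJ_intCast, imK_intCast, ofInt_re, ofInt_imI,
      ofInt_imJ, ofInt_imK, omega_re, omega_imI, omega_imJ, omega_imK]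
    push_cast
    ring
  have hm₀ : 0 ≤ m := by exact_mod_cast hm ▸ normSq_nonneg
  lift m to ℕ using hm₀ with k
  exact ⟨k, by simpa using hm⟩

lemma exists_normSq_sub_lt_one (q : ℍ[ℚ]) : ∃ c ∈ order, normSq (q - c) < 1 := by
  set a := ofCoords (round q.re) (round q.imI) (round q.imJ) (round q.imK)
  set b := ofCoords (round (q.re - 1 / 2)) (round (q.imI - 1 / 2)) (round (q.imJ - 1 / 2))
    (round (q.imK - 1 / 2))
  have hsum : normSq (q - ofInt a) + normSq (q - (ofInt b + omega)) ≤ 1 := by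
    simp only [normSq_def', a, b, re_sub, imI_sub, imJ_sub, imK_sub, re_add, imI_add, imJ_add,
      imK_add, ofInt_re, ofInt_imI, ofInt_imJ, ofInt_imK, ofCoords_re, ofCoords_imI, ofCoords_imJ,
      ofCoords_imK, omega_re, omega_imI, omega_imJ, omega_imK]
    linarith [sq_sub_round_add_sq_sub_round_sub_half_le q.re,
      sq_sub_round_add_sq_sub_round_sub_half_le q.imI,
      sq_sub_round_add_sq_sub_round_sub_half_le q.imJ,
      sq_sub_round_add_sq_sub_round_sub_half_le q.imK]
  by_cases ha : normSq (q - ofInt a) < 1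
  · exact ⟨_, ofInt_mem a, ha⟩
  · exact ⟨_, add_mem (ofInt_mem b) omega_mem, by linarith⟩

lemma exists_normSq_sub_mul_lt (a : ℍ[ℚ]) {d : ℍ[ℚ]} (hd : d ≠ 0) :
    ∃ c ∈ order, normSq (a - d * c) < normSq d := by
  obtain ⟨c, hc, hlt⟩ := exists_normSq_sub_lt_one (d⁻¹ * a)
  refine ⟨c, hc, ?_⟩
  have hd' : 0 < normSq d := normSq_nonneg.lt_of_ne (normSq_ne_zero.2 hd).symm
  calc normSq (a - d * c) = normSq d * normSq (d⁻¹ * a - c) := by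
        rw [← map_mul, mul_sub, mul_inv_cancel_left₀ hd]
    _ < normSq d := mul_lt_of_lt_one_right hd' hlt

def span (a b : ℍ[ℚ]) : Set ℍ[ℚ] := {q | ∃ γ ∈ order, ∃ δ ∈ order, q = a * γ + b * δ}

lemma span_subset_order {a b : ℍ[ℚ]} (ha : a ∈ order) (hb : b ∈ order) : span a b ⊆ order := by
  rintro _ ⟨γ, hγ, δ, hδ, rfl⟩
  exact add_mem (mul_mem ha hγ) (mul_mem hb hδ)

lemma exists_gcd {a b : ℍ[ℚ]} (ha : a ∈ order) (hb : b ∈ order) (hb₀ : b ≠ 0) :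
    ∃ g ∈ span a b, (∃ c ∈ order, a = g * c) ∧ ∃ d ∈ order, b = g * d := by
  classical
  have hex : ∃ n : ℕ, ∃ q ∈ span a b, q ≠ 0 ∧ normSq q = n := by
    obtain ⟨n, hn⟩ := exists_normSq_eq_natCast hb
    exact ⟨n, b, ⟨0, zero_mem _, 1, one_mem _, by simp⟩, hb₀, hn⟩
  obtain ⟨g, ⟨γ, hγ, δ, hδ, rfl⟩, hg₀, hg⟩ := Nat.find_spec hex
  have hdvd : ∀ x ∈ span a b, ∃ c ∈ order, x = (a * γ + b * δ) * c := by
    rintro _ ⟨γ', hγ', δ', hδ', rfl⟩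
    obtain ⟨c, hc, hlt⟩ := exists_normSq_sub_mul_lt (a * γ' + b * δ') hg₀
    refine ⟨c, hc, ?_⟩
    by_contra hne
    have hr : a * γ' + b * δ' - (a * γ + b * δ) * c ∈ span a b :=
      ⟨γ' - γ * c, sub_mem hγ' (mul_mem hγ hc), δ' - δ * c, sub_mem hδ' (mul_mem hδ hc), by
        noncomm_ring⟩
    obtain ⟨n, hn⟩ := exists_normSq_eq_natCast (span_subset_order ha hb hr)
    rw [hg, hn, Nat.cast_lt] at hlt
    exact Nat.find_min hex hlt ⟨_, hr, sub_ne_zero.2 hne, hn⟩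
  exact ⟨_, ⟨γ, hγ, δ, hδ, rfl⟩, hdvd a ⟨1, one_mem _, 0, zero_mem _, by simp⟩,
    hdvd b ⟨0, zero_mem _, 1, one_mem _, by simp⟩⟩

lemma exists_normSq_eq_mul_of_mem_span {S : ℍ[ℤ]} {s : ℤ} (hdvd : s ^ 2 ∣ normSq S) {g : ℍ[ℚ]}
    (hg : g ∈ span (ofInt S) s) : ∃ t : ℤ, normSq g = s * t := by
  obtain ⟨k, hk⟩ := hdvd
  obtain ⟨γ, hγ, δ, hδ, rfl⟩ := hg
  obtain ⟨nγ, hnγ⟩ := exists_normSq_eq_natCast hγ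
  obtain ⟨nδ, hnδ⟩ := exists_normSq_eq_natCast hδ
  obtain ⟨w, hw⟩ := exists_two_zsmul_eq_ofInt (mul_mem (mul_mem (ofInt_mem S) hγ) (star_mem hδ))
  refine ⟨s * k * nγ + s * nδ + w.re, ?_⟩
  have hre : 2 * (ofInt S * γ * star δ).re = w.re := by
    simpa [two_mul] using congr_arg (·.re) hw
  have hcross : (ofInt S * γ * star ((s : ℍ[ℚ]) * δ)).re = s * (ofInt S * γ * star δ).re := by
    rw [star_mul, star_intCast, ← mul_assoc, ← Int.cast_comm, ← zsmul_eq_mul, re_smul, zsmul_eq_mul]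
  rw [normSq_add, hcross, map_mul, map_mul, normSq_ofInt, hk, hnγ, hnδ, normSq_intCast]
  push_cast
  linear_combination (s : ℚ) * hre

lemma exists_mem_span_normSq_eq {S : ℍ[ℤ]} {s : ℤ} (hs : 0 < s) (hodd : Odd s)
    (hprim : Int.gcd (Int.gcd (Int.gcd S.re S.imI) S.imJ) S.imK = 1) (hdvd : s ^ 2 ∣ normSq S) :
    ∃ g ∈ span (ofInt S) s, normSq g = s ∧ ∃ c ∈ order, ofInt S = g * c := by
  have hs₀ : (s : ℍ[ℚ]) ≠ 0 := by
    rw [← coe_intCast, Ne, ← coe_zero, coe_inj]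
    exact_mod_cast hs.ne'
  obtain ⟨g, hg, ⟨c, hc, hSc⟩, d, hd, hsd⟩ := exists_gcd (ofInt_mem S) (intCast_mem order s) hs₀
  obtain ⟨t, ht⟩ := exists_normSq_eq_mul_of_mem_span hdvd hg
  obtain ⟨m, hm⟩ := exists_normSq_eq_natCast hd
  have hstm : s = t * m := by
    have h := congr_arg normSq hsd
    rw [normSq_intCast, map_mul, ht, hm] at h
    have h' : (s : ℚ) * s = s * (t * m) := by linear_combination h
    exact_mod_cast mul_left_cancel₀ (by exact_mod_cast hs.ne' : (s : ℚ) ≠ 0) h'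
  have hstar : star g = t * d := by
    apply mul_left_cancel₀ hs₀
    calc (s : ℍ[ℚ]) * star g = star g * g * d := by rw [mul_assoc, ← hsd, Int.cast_comm]
      _ = s * (t * d) := by rw [star_mul_self, ht, ← mul_assoc]; norm_cast
  have hSt : ofInt S = t * (star d * c) := by
    rw [hSc, ← star_star g, hstar, star_mul, star_intCast, ← Int.cast_comm, mul_assoc]
  obtain ⟨w, hw⟩ := exists_two_zsmul_eq_ofInt (mul_mem (star_mem hd) hc)
  have h2S : (2 : ℤ) • S = t • w := ofInt_injective <| by
    rw [map_zsmul, map_zsmul, hSt, ← hw, ← zsmul_eq_mul, smul_comm]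
  obtain ⟨y, hy⟩ := exists_eq_zsmul_of_two_zsmul_eq (Int.odd_mul.1 (hstm ▸ hodd)).1 h2S
  obtain rfl | rfl := Int.isUnit_iff.1 (isUnit_of_eq_zsmul hprim hy)
  · exact ⟨g, hg, by simp [ht], c, hc, hSc⟩
  · have hg₀ := ht ▸ normSq_nonneg (a := g)
    have hs' : (0 : ℚ) < s := by exact_mod_cast hs
    linarith

lemma exists_mul_star_eq_ofInt {q : ℍ[ℚ]} (hq : q ∈ order) :
    ∃ u ∈ order, normSq u = 1 ∧ ∃ Y, q * star u = ofInt Y := by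
  obtain ⟨w, n, rfl⟩ := id hq
  obtain ⟨r, rfl | rfl⟩ := Int.even_or_odd' n
  · refine ⟨1, one_mem _, map_one _, w + r • ofCoords 1 1 1 1, ?_⟩
    rw [star_one, mul_one, map_add, map_zsmul, ← two_zsmul_omega, smul_smul, mul_comm]
  -- `2q` has odd coordinates; reducing them mod `4` to `±1` writes `q = 2m + u` where `2u` has
  -- coordinates `±1`, so `u` is a unit and `q ū = m (2ū) + 1` is integral.
  set a := (2 : ℤ) • w + (2 * r + 1) • ofCoords 1 1 1 1
  have h2q : (2 : ℤ) • (ofInt w + (2 * r + 1) • omega) = ofInt a := by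
    rw [smul_add, smul_comm, two_zsmul_omega]
    simp only [a, map_add, map_zsmul]
  obtain ⟨e, m, he, ha⟩ := exists_eq_add_four_zsmul (a := a)
    ⟨w.re + r, by simp only [a, re_add, re_smul, ofCoords_re, smul_eq_mul]; ring⟩
    ⟨w.imI + r, by simp only [a, imI_add, imI_smul, ofCoords_imI, smul_eq_mul]; ring⟩
    ⟨w.imJ + r, by simp only [a, imJ_add, imJ_smul, ofCoords_imJ, smul_eq_mul]; ring⟩
    ⟨w.imK + r, by simp only [a, imK_add, imK_smul, ofCoords_imK, smul_eq_mul]; ring⟩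
  set u := ofInt w + (2 * r + 1) • omega - (2 : ℤ) • ofInt m
  have h2u : (2 : ℤ) • u = ofInt e := by
    rw [smul_sub, h2q, ha, map_add, map_zsmul, smul_smul]
    abel
  have hu : normSq u = 1 := by
    have h := congr_arg normSq h2u
    rw [← Int.cast_smul_eq_zsmul ℚ, normSq_smul, normSq_ofInt, he] at h
    push_cast at h
    linarith
  refine ⟨u, sub_mem hq (zsmul_mem (ofInt_mem m) 2), hu, m * star e + 1, ?_⟩
  calc (ofInt w + (2 * r + 1) • omega) * star u = (u + (2 : ℤ) • ofInt m) * star u := by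
        rw [sub_add_cancel]
    _ = u * star u + ofInt m * ((2 : ℤ) • star u) := by
        rw [add_mul, smul_mul_assoc, mul_smul_comm]
    _ = ofInt (m * star e + 1) := by
        rw [self_mul_star, hu, coe_one, ← star_zsmul, h2u, ← ofInt_star, ← map_mul, map_add,
          map_one, add_comm]

end Hurwitz

open Hurwitz in
lemma exists_lipschitz_gcd {S : ℍ[ℤ]} {s : ℤ} (hs : 0 < s) (hodd : Odd s)
    (hprim : Int.gcd (Int.gcd (Int.gcd S.re S.imI) S.imJ) S.imK = 1) (hdvd : s ^ 2 ∣ normSq S) :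
    ∃ X : ℍ[ℤ], normSq X = s ∧ (∃ A, star X * S = s • A) ∧ ∃ α β, X = S * α + s • β := by
  obtain ⟨g, hg, hgn, c, hc, hSc⟩ := exists_mem_span_normSq_eq hs hodd hprim hdvd
  obtain ⟨u, hu, hun, X, hX⟩ :=
    exists_mul_star_eq_ofInt (span_subset_order (ofInt_mem S) (intCast_mem _ s) hg)
  have hXn : normSq X = s := by
    have h := congr_arg normSq hX
    rw [map_mul, normSq_star, hgn, hun, mul_one, normSq_ofInt] at h
    exact_mod_cast h.symm
  have hgX : g = ofInt X * u := by
    rw [← hX, mul_assoc, star_mul_self, hun, coe_one, mul_one]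
  obtain ⟨w, hw⟩ := exists_two_zsmul_eq_ofInt (mul_mem hu hc)
  have h2A : (2 : ℤ) • (star X * S) = s • w := ofInt_injective <| by
    rw [map_zsmul, map_mul, ofInt_star, hSc, hgX, map_zsmul, ← hw, mul_assoc, ← mul_assoc (star _),
      star_mul_self, normSq_ofInt, hXn, coe_intCast, ← zsmul_eq_mul, smul_comm]
  obtain ⟨A, hA⟩ := exists_eq_zsmul_of_two_zsmul_eq hodd h2A
  obtain ⟨γ, hγ, δ, hδ, hgγδ⟩ := hg
  obtain ⟨a, ha⟩ := exists_two_zsmul_eq_ofInt (mul_mem hγ (star_mem hu))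
  obtain ⟨b, hb⟩ := exists_two_zsmul_eq_ofInt (mul_mem hδ (star_mem hu))
  have h2X : (2 : ℤ) • X = S * a + s • b := ofInt_injective <| by
    rw [map_zsmul, ← hX, hgγδ, map_add, map_mul, map_zsmul, ← ha, ← hb, add_mul, mul_assoc,
      mul_assoc, ← zsmul_eq_mul, smul_add, mul_smul_comm, smul_comm]
  exact ⟨X, hXn, ⟨A, hA⟩, exists_eq_mul_add_zsmul_of_two_zsmul_eq hodd h2X⟩

section

variable {X S A α β : ℍ[ℤ]} {s : ℤ}

lemma re_eq_one_of_star_mul_mul_eq {P P' : ℍ[ℤ]} {c : ℤ} (hc : c ≠ 0)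
    (h : star X * P * X = c • P') (hre : normSq X * P.re = c) : P'.re = 1 := by
  have h' := congr_arg (·.re) h
  rw [re_star_mul_mul, hre, re_smul, smul_eq_mul] at h'
  exact mul_left_cancel₀ hc (by rw [mul_one]; exact h'.symm)

lemma star_mul_mul_eq_sq_zsmul (hX : X = S * α + s • β) {P C D : ℍ[ℤ]}
    (hC : star X * P = s • C) (hD : star X * P * S = s ^ 2 • D) :
    star X * P * X = s ^ 2 • (D * α + C * β) := by
  calc star X * P * X = star X * P * (S * α + s • β) := by rw [← hX]
    _ = s ^ 2 • (D * α + C * β) := by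
      rw [mul_add, ← mul_assoc, hD, mul_smul_comm, hC, smul_mul_assoc, smul_mul_assoc]
      module

lemma exists_star_mul_self_mul_eq (hX : X = S * α + s • β) (hA : star X * S = s • A)
    (hre : S.re = s) {k : ℤ} (hk : normSq S = s ^ 2 * k) : ∃ S', star X * S * X = s ^ 2 • S' := by
  have hD : star X * S * S = s ^ 2 • ((2 : ℤ) • A - k • star X) := by
    rw [mul_assoc, mul_self_eq_two_re_mul_sub_normSq, hre, hk, mul_sub, ← mul_assoc,
      mul_coe_eq_smul, mul_coe_eq_smul, smul_mul_assoc, hA]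
    module
  exact ⟨_, star_mul_mul_eq_sq_zsmul hX hA hD⟩

lemma exists_star_mul_mul_eq_zsmul (hs : s ≠ 0) (hX : X = S * α + s • β)
    (hA : star X * S = s • A) (hre : S.re = s) {S' : ℍ[ℤ]} (hS' : star X * S * X = s ^ 2 • S')
    {Q : ℍ[ℤ]} (hQ : Q.re = 1) {j : ℤ} (hj : normSq (s • Q - S) = s ^ 2 * j) :
    ∃ Q', star X * Q * X = s • Q' := by
  set R := s • Q - S
  have hRR : R * R = -((s ^ 2 * j) • 1) := by
    rw [← sq, sq_eq_neg_normSq.2 (by simp [R, hQ, hre]), hj, ← coe_mul_eq_smul, mul_one]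
  have hC : star X * R = s • (star X * Q - A) := by
    rw [mul_sub, mul_smul_comm, hA, smul_sub]
  have hD : star X * R * S = s ^ 2 • ((star X * Q - A) * Q + j • star X) := by
    have hRS : R * S = s • (R * Q) - R * R := by
      rw [show S = s • Q - R by simp [R], mul_sub, mul_smul_comm]
    rw [mul_assoc, hRS, hRR, mul_sub, mul_smul_comm, ← mul_assoc, hC, mul_neg, mul_smul_comm,
      mul_one, smul_mul_assoc]
    module
  have key : s • (star X * Q * X) =
      s • (s • (((star X * Q - A) * Q + j • star X) * α + (star X * Q - A) * β + S')) :=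
    calc s • (star X * Q * X) = star X * R * X + star X * S * X := by
          rw [← add_mul, ← mul_add, sub_add_cancel, mul_smul_comm, smul_mul_assoc]
      _ = _ := by
        rw [star_mul_mul_eq_sq_zsmul hX hC hD, hS']
        module
  exact ⟨_, smul_right_injective _ hs key⟩

end

/-- Key step of the lattice-embedding theorem in `ℝ³`: the rotation determined by a
quaternion GCD `X` (of norm `s`) carries the rational point represented by the
primitive quaternion `S` with odd scalar `s`, together with every lattice point at
integer squared distance from it, into the lattice. -/
theorem quaternion_gcd_embedding_step (s : ℤ) (hs : 0 < s) (hodd : Odd s)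
    (S : Quaternion ℤ) (hre : S.re = s)
    (hprim : Int.gcd (Int.gcd (Int.gcd S.re S.imI) S.imJ) S.imK = 1)
    (hdvd : s ^ 2 ∣ Quaternion.normSq S) :
    ∃ X : Quaternion ℤ, Quaternion.normSq X = s ∧
      (∃ S' : Quaternion ℤ, S'.re = 1 ∧ star X * S * X = (s ^ 2 : ℤ) • S') ∧
      (∀ Q : Quaternion ℤ, Q.re = 1 →
        s ^ 2 ∣ Quaternion.normSq ((s : ℤ) • Q - S) →
        ∃ Q' : Quaternion ℤ, Q'.re = 1 ∧ star X * Q * X = (s : ℤ) • Q') := by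
  obtain ⟨X, hXn, ⟨A, hA⟩, α, β, hX⟩ := exists_lipschitz_gcd hs hodd hprim hdvd
  obtain ⟨k, hk⟩ := hdvd
  obtain ⟨S', hS'⟩ := exists_star_mul_self_mul_eq hX hA hre hk
  refine ⟨X, hXn, ⟨S', re_eq_one_of_star_mul_mul_eq (pow_ne_zero 2 hs.ne') hS'
    (by rw [hXn, hre, sq]), hS'⟩, fun Q hQ ⟨j, hj⟩ => ?_⟩
  obtain ⟨Q', hQ'⟩ := exists_star_mul_mul_eq_zsmul hs.ne' hX hA hre hS' hQ hj
  exact ⟨Q', re_eq_one_of_star_mul_mul_eq hs.ne' hQ' (by rw [hXn, hQ, mul_one]), hQ'⟩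
end

section
/- Let u ∈ ℚ with u ≠ 0, let qv, qw, qx, qy, qz ∈ ℚ (the squares of the remaining edge-lengths), let d ∈ ℚ with d ≠ 0 satisfy 16·d^2 = 2u²·qv + 2u²·qw + 2·qv·qw − u⁴ − qv² − qw², and let e ∈ ℚ satisfy 288·e^2 = det !![0,1,1,1,1; 1,0,u²,qv,qx; 1,u²,0,qw,qy; 1,qv,qw,0,qz; 1,qx,qy,qz,0]. Then there exist points P, Q, R, S : Fin 3 → ℚ with ∑(Q−P)² = u², ∑(R−P)² = qv, ∑(R−Q)² = qw, ∑(S−P)² = qx, ∑(S−Q)² = qy, ∑(S−R)² = qz. -/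
/-!
Put `P` at the origin, `Q = (u, 0, 0)` and `R = (a, h, 0)`. The law of cosines makes the foot `a`
of the altitude from `R` rational, and Hero's formula makes its height `h = 2d/u` rational. The
apex `S = (b, c, t)` has `b` and `c` cut out by linear equations in the squared edges, while the
Cayley–Menger determinant in these coordinates is `8 (u h t)² = 32 d² t²`, so `t = 3e/d`.
-/

/-- The Cayley–Menger determinant of `0, (u, 0, 0), (a, h, 0), (b, c, t)`, written through
`x = b² + c² + t²` because the existence of `t` is what has to be shown. -/
theorem det_cayleyMenger_of_coords {R : Type*} [CommRing R] (u a h b c x : R) :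
    Matrix.det !![0, 1, 1, 1, 1;
      1, 0, u ^ 2, a ^ 2 + h ^ 2, x;
      1, u ^ 2, 0, (a - u) ^ 2 + h ^ 2, x - b ^ 2 + (b - u) ^ 2;
      1, a ^ 2 + h ^ 2, (a - u) ^ 2 + h ^ 2, 0, x - b ^ 2 - c ^ 2 + (b - a) ^ 2 + (c - h) ^ 2;
      1, x, x - b ^ 2 + (b - u) ^ 2, x - b ^ 2 - c ^ 2 + (b - a) ^ 2 + (c - h) ^ 2, 0] =
    8 * (u * h) ^ 2 * (x - b ^ 2 - c ^ 2) := by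
  simp [Matrix.det_succ_row_zero, Fin.sum_univ_succ, Fin.succAbove]
  ring

section Field

variable {K : Type*} [Field K] [CharZero K]

/-- The first coordinate of any point at squared distance `p` from `0` and `q` from `(u, 0, 0)`. -/
def footAbscissa (u p q : K) : K := (u ^ 2 + p - q) / (2 * u)

theorem footAbscissa_sq_sub_sq {u : K} (hu : u ≠ 0) (p q : K) :
    footAbscissa u p q ^ 2 - (footAbscissa u p q - u) ^ 2 = p - q := by
  unfold footAbscissa
  field_simp
  ring

theorem footAbscissa_sq_add_sq_of_hero {u p q d : K} (hu : u ≠ 0)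
    (hface : 16 * d ^ 2 = 2 * u ^ 2 * p + 2 * u ^ 2 * q + 2 * p * q - u ^ 4 - p ^ 2 - q ^ 2) :
    footAbscissa u p q ^ 2 + (2 * d / u) ^ 2 = p := by
  unfold footAbscissa
  field_simp
  linear_combination hface

end Field

/-- Rational embedding of a tetrahedron: rational edge-length squares together with a
rational flag (edge `u`, face area `d`, volume `e`, with `u`, `d` nonzero) suffice for
a pose with rational coordinates in `ℚ³`. -/
theorem tetrahedron_rational_embedding (u qv qw qx qy qz : ℚ)
    (hu : u ≠ 0) (d : ℚ) (hd : d ≠ 0)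
    (hface : 16 * d ^ 2 =
      2 * u ^ 2 * qv + 2 * u ^ 2 * qw + 2 * qv * qw - u ^ 4 - qv ^ 2 - qw ^ 2)
    (e : ℚ)
    (hvol : 288 * e ^ 2 = Matrix.det
      !![0, 1, 1, 1, 1;
         1, 0, u ^ 2, qv, qx;
         1, u ^ 2, 0, qw, qy;
         1, qv, qw, 0, qz;
         1, qx, qy, qz, 0]) :
    ∃ P Q R S : Fin 3 → ℚ,
      (∑ k, (Q k - P k) ^ 2 = u ^ 2) ∧
      (∑ k, (R k - P k) ^ 2 = qv) ∧
      (∑ k, (R k - Q k) ^ 2 = qw) ∧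
      (∑ k, (S k - P k) ^ 2 = qx) ∧
      (∑ k, (S k - Q k) ^ 2 = qy) ∧
      (∑ k, (S k - R k) ^ 2 = qz) := by
  set a := footAbscissa u qv qw
  set b := footAbscissa u qx qy
  set h := 2 * d / u with h_def
  have huh : u * h = 2 * d := by rw [h_def]; field_simp
  have hh : h ≠ 0 := by rw [h_def]; positivity
  set c := (qv + qx - qz - 2 * a * b) / (2 * h) with c_def
  have hv : a ^ 2 + h ^ 2 = qv := footAbscissa_sq_add_sq_of_hero hu hface
  have hw : (a - u) ^ 2 + h ^ 2 = qw := by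
    linear_combination hv - footAbscissa_sq_sub_sq hu qv qw
  have hy : qx - b ^ 2 + (b - u) ^ 2 = qy := by
    linear_combination -footAbscissa_sq_sub_sq hu qx qy
  have hz : qx - b ^ 2 - c ^ 2 + (b - a) ^ 2 + (c - h) ^ 2 = qz := by
    have hch : 2 * c * h = qv + qx - qz - 2 * a * b := by rw [c_def]; field_simp
    linear_combination hv - hch
  have ht : qx - b ^ 2 - c ^ 2 = (3 * e / d) ^ 2 := by
    have hcm := det_cayleyMenger_of_coords u a h b c qx
    rw [hv, hw, hy, hz, huh, ← hvol] at hcm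
    field_simp
    linear_combination -hcm / 32
  refine ⟨0, ![u, 0, 0], ![a, h, 0], ![b, c, 3 * e / d], ?_, ?_, ?_, ?_, ?_, ?_⟩ <;>
    simp only [Fin.sum_univ_three, Matrix.cons_val_zero, Matrix.cons_val_one,
      Matrix.cons_val_two, Matrix.tail_cons, Matrix.head_cons, Pi.zero_apply]
  · ring
  · linear_combination hv
  · linear_combination hw
  · linear_combination -ht
  · linear_combination hy - ht
  · linear_combination hz - ht
end

section
/- Let u, v, w, x, y, z be positive integers which are the edge-lengths QP, RP, RQ, SP, SQ, SR of a Heronian tetrahedron: there exist rationals d ≠ 0 and c with (4d)² = (u+v+w)(u+v−w)(u−v+w)(−u+v+w) and (4c)² = (u+x+y)(u+x−y)(u−x+y)(−u+x+y), and a rational e with 288·e² equal to the Cayley–Menger determinant det !![0,1,1,1,1; 1,0,u²,v²,x²; 1,u²,0,w²,y²; 1,v²,w²,0,z²; 1,x²,y²,z²,0], with d, c ≥ 0 and e ≠ 0. Define the axial-pose coordinates R₁ = (v² − w² + u²)/(2u), R₂ = 2d/u, S₁ = (x² − y² + u²)/(2u), S₂ = (x² − z² + R₁² + R₂² − 2·S₁·R₁)/(2·R₂),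 S₃ = 3e/d, all in ℚ. Then every prime p dividing the denominator of any of R₁, R₂, S₁, S₂, S₃ (as reduced fractions) satisfies p ≡ 1 (mod 4). -/
/-!
In axial pose the coordinates satisfy `R₁² + R₂² = v²`, `S₁² + T² = x²` and `S₂² + S₃² = T²`,
where `T = 2c/u` is the height of the face `PQS` over the edge `PQ`; the last identity is the
Cayley–Menger determinant evaluated in these coordinates. For a prime `p ≢ 1 (mod 4)`, a sum of
two rational squares that is `p`-integral has `p`-integral summands: otherwise, dividing by the
summand of larger `p`-adic norm gives `1 + t² ≡ 0 (mod p²)` for a `p`-adic integer `t`, which is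
impossible because `-1` is not a square modulo `p` (modulo `4` when `p = 2`). Applied three
times, starting from the integers `v²` and `x²`, this keeps every such `p` out of the
denominators.
-/

theorem ZMod.one_add_sq_ne_zero_of_mod_four_ne_one {p : ℕ} [Fact p.Prime] (hp4 : p % 4 ≠ 1)
    (s : ZMod (p ^ 2)) : 1 + s ^ 2 ≠ 0 := by
  rcases (Fact.out : p.Prime).eq_two_or_odd' with rfl | hodd
  · revert s; decide
  · intro hs
    set π := ZMod.castHom (dvd_pow_self p two_ne_zero) (ZMod p)
    have hs' : 1 + π s ^ 2 = 0 := by simpa using congrArg π hs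
    have hsq : IsSquare (-1 : ZMod p) := ⟨π s, by linear_combination -hs'⟩
    have hp2 := Nat.odd_iff.mp hodd
    exact ZMod.exists_sq_eq_neg_one_iff.mp hsq (by omega)

theorem PadicInt.zpow_neg_two_lt_norm_one_add_sq {p : ℕ} [Fact p.Prime] (hp4 : p % 4 ≠ 1)
    (t : ℤ_[p]) : (p : ℝ) ^ (-2 : ℤ) < ‖1 + t ^ 2‖ := by
  by_contra! h
  rw [show (-2 : ℤ) = -(2 : ℕ) from rfl, norm_le_pow_iff_mem_span_pow, ← ker_toZModPow,
    RingHom.mem_ker, map_add, map_one, map_pow] at h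
  exact ZMod.one_add_sq_ne_zero_of_mod_four_ne_one hp4 _ h

theorem Padic.norm_le_one_of_norm_sq_add_sq_le_one {p : ℕ} [Fact p.Prime] (hp4 : p % 4 ≠ 1)
    {a b : ℚ_[p]} (h : ‖a ^ 2 + b ^ 2‖ ≤ 1) : ‖a‖ ≤ 1 ∧ ‖b‖ ≤ 1 := by
  wlog hba : ‖b‖ ≤ ‖a‖ generalizing a b
  · exact (this (b := a) (by rwa [add_comm]) (le_of_not_ge hba)).symm
  suffices ha : ‖a‖ ≤ 1 from ⟨ha, hba.trans ha⟩
  by_contra! ha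
  have hpa : (p : ℝ) ≤ ‖a‖ := by
    simpa using (norm_le_pow_iff_norm_lt_pow_add_one a 0).not.mp (by simpa using ha.not_ge)
  have ha0 : a ≠ 0 := norm_pos_iff.mp (one_pos.trans ha)
  have hp0 : (0 : ℝ) < p := by exact_mod_cast (Fact.out : p.Prime).pos
  have ht : ‖b / a‖ ≤ 1 := by rw [norm_div]; exact div_le_one_of_le₀ hba (norm_nonneg a)
  have key : (p : ℝ) ^ (-2 : ℤ) < ‖1 + (b / a) ^ 2‖ :=
    PadicInt.zpow_neg_two_lt_norm_one_add_sq hp4 ⟨b / a, ht⟩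
  have hsum : 1 + (b / a) ^ 2 = (a ^ 2 + b ^ 2) / a ^ 2 := by field_simp
  rw [hsum, norm_div, norm_pow, zpow_neg, zpow_ofNat] at key
  have : ‖a ^ 2 + b ^ 2‖ / ‖a‖ ^ 2 ≤ ((p : ℝ) ^ 2)⁻¹ := by
    rw [← one_div]
    exact div_le_div₀ zero_le_one h (by positivity) (pow_le_pow_left₀ hp0.le hpa 2)
  linarith

theorem Rat.not_dvd_den_of_not_dvd_den_sq_add_sq {p : ℕ} [Fact p.Prime] (hp4 : p % 4 ≠ 1)
    {a b : ℚ} (h : ¬p ∣ (a ^ 2 + b ^ 2).den) : ¬p ∣ a.den ∧ ¬p ∣ b.den := by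
  simp only [← Rat.padicValuation_le_one_iff, ← Padic.norm_rat_le_one_iff_padicValuation_le_one,
    Rat.cast_add, Rat.cast_pow] at h ⊢
  exact Padic.norm_le_one_of_norm_sq_add_sq_le_one hp4 h

theorem Matrix.det_cayleyMenger_of_axial {R : Type*} [CommRing R]
    {u v w x y z r₁ r₂ s₁ s₂ h : R}
    (hv : v ^ 2 = r₁ ^ 2 + r₂ ^ 2) (hw : w ^ 2 = (r₁ - u) ^ 2 + r₂ ^ 2)
    (hx : x ^ 2 = s₁ ^ 2 + s₂ ^ 2 + h) (hy : y ^ 2 = (s₁ - u) ^ 2 + s₂ ^ 2 + h)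
    (hz : z ^ 2 = (s₁ - r₁) ^ 2 + (s₂ - r₂) ^ 2 + h) :
    Matrix.det
      !![0, 1, 1, 1, 1;
         1, 0, u ^ 2, v ^ 2, x ^ 2;
         1, u ^ 2, 0, w ^ 2, y ^ 2;
         1, v ^ 2, w ^ 2, 0, z ^ 2;
         1, x ^ 2, y ^ 2, z ^ 2, 0] = 8 * u ^ 2 * r₂ ^ 2 * h := by
  rw [hv, hw, hx, hy, hz]
  simp only [det_succ_row_zero, Fin.sum_univ_succ, det_unique, Fin.default_eq_zero, of_apply,
    submatrix_apply, Fin.succAbove, cons_val, Fin.reduceSucc, Fin.coe_ofNat_eq_mod, ↓reduceIte,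
    Fin.reduceCastSucc, Fin.reduceLT]
  ring

theorem sq_eq_sq_add_sq_of_heron {K : Type*} [Field K] [CharZero K] {u v w d : K} (hu : u ≠ 0)
    (heron : (4 * d) ^ 2 = (u + v + w) * (u + v - w) * (u - v + w) * (-u + v + w)) :
    v ^ 2 = ((v ^ 2 - w ^ 2 + u ^ 2) / (2 * u)) ^ 2 + (2 * d / u) ^ 2 ∧
      w ^ 2 = ((v ^ 2 - w ^ 2 + u ^ 2) / (2 * u) - u) ^ 2 + (2 * d / u) ^ 2 := by
  constructor <;> field_simp <;> linear_combination -heron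

theorem sq_add_sq_eq_of_cayleyMenger {K : Type*} [Field K] [CharZero K]
    {u v w x y z r₁ r₂ s₁ s₂ t d e : K}
    (hd : d ≠ 0) (hr₂ : u * r₂ = 2 * d)
    (hv : v ^ 2 = r₁ ^ 2 + r₂ ^ 2) (hw : w ^ 2 = (r₁ - u) ^ 2 + r₂ ^ 2)
    (hx : x ^ 2 = s₁ ^ 2 + t ^ 2) (hy : y ^ 2 = (s₁ - u) ^ 2 + t ^ 2)
    (hs₂ : 2 * s₂ * r₂ = x ^ 2 - z ^ 2 + r₁ ^ 2 + r₂ ^ 2 - 2 * s₁ * r₁)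
    (hvol : 288 * e ^ 2 = Matrix.det
      !![0, 1, 1, 1, 1;
         1, 0, u ^ 2, v ^ 2, x ^ 2;
         1, u ^ 2, 0, w ^ 2, y ^ 2;
         1, v ^ 2, w ^ 2, 0, z ^ 2;
         1, x ^ 2, y ^ 2, z ^ 2, 0]) :
    s₂ ^ 2 + (3 * e / d) ^ 2 = t ^ 2 := by
  have hx' : x ^ 2 = s₁ ^ 2 + s₂ ^ 2 + (t ^ 2 - s₂ ^ 2) := by linear_combination hx
  have hy' : y ^ 2 = (s₁ - u) ^ 2 + s₂ ^ 2 + (t ^ 2 - s₂ ^ 2) := by linear_combination hy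
  have hz : z ^ 2 = (s₁ - r₁) ^ 2 + (s₂ - r₂) ^ 2 + (t ^ 2 - s₂ ^ 2) := by
    linear_combination hs₂ + hx
  rw [Matrix.det_cayleyMenger_of_axial hv hw hx' hy' hz] at hvol
  field_simp
  linear_combination hvol / 32 + (t ^ 2 - s₂ ^ 2) * (u * r₂ + 2 * d) / 4 * hr₂

theorem heronian_axial_pose_denominators_general (u v w x y z : ℤ)
    (hu : 0 < u)
    (d : ℚ) (hd0 : d ≠ 0)
    (heron_d : (4 * d) ^ 2 =
      ((u : ℚ) + v + w) * ((u : ℚ) + v - w) * ((u : ℚ) - v + w) * (-(u : ℚ) + v + w))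
    (c : ℚ)
    (heron_c : (4 * c) ^ 2 =
      ((u : ℚ) + x + y) * ((u : ℚ) + x - y) * ((u : ℚ) - x + y) * (-(u : ℚ) + x + y))
    (e : ℚ)
    (hvol : 288 * e ^ 2 = Matrix.det
      !![0, 1, 1, 1, 1;
         1, 0, (u : ℚ) ^ 2, (v : ℚ) ^ 2, (x : ℚ) ^ 2;
         1, (u : ℚ) ^ 2, 0, (w : ℚ) ^ 2, (y : ℚ) ^ 2;
         1, (v : ℚ) ^ 2, (w : ℚ) ^ 2, 0, (z : ℚ) ^ 2;
         1, (x : ℚ) ^ 2, (y : ℚ) ^ 2, (z : ℚ) ^ 2, 0])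
    (R₁ R₂ S₁ S₂ S₃ : ℚ)
    (hR₁ : R₁ = ((v : ℚ) ^ 2 - (w : ℚ) ^ 2 + (u : ℚ) ^ 2) / (2 * u))
    (hR₂ : R₂ = 2 * d / u)
    (hS₁ : S₁ = ((x : ℚ) ^ 2 - (y : ℚ) ^ 2 + (u : ℚ) ^ 2) / (2 * u))
    (hS₂ : S₂ = ((x : ℚ) ^ 2 - (z : ℚ) ^ 2 + R₁ ^ 2 + R₂ ^ 2 - 2 * S₁ * R₁) / (2 * R₂))
    (hS₃ : S₃ = 3 * e / d) :
    ∀ p : ℕ, Nat.Prime p →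
      ((p : ℤ) ∣ R₁.den ∨ (p : ℤ) ∣ R₂.den ∨ (p : ℤ) ∣ S₁.den ∨
        (p : ℤ) ∣ S₂.den ∨ (p : ℤ) ∣ S₃.den) →
      p % 4 = 1 := by
  have hu0 : (u : ℚ) ≠ 0 := by exact_mod_cast hu.ne'
  obtain ⟨hv2, hw2⟩ := sq_eq_sq_add_sq_of_heron hu0 heron_d
  obtain ⟨hx2, hy2⟩ := sq_eq_sq_add_sq_of_heron hu0 heron_c
  rw [← hR₁, ← hR₂] at hv2 hw2
  rw [← hS₁] at hx2 hy2
  have hR₂0 : R₂ ≠ 0 := by rw [hR₂]; positivity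
  have hS₂R₂ : 2 * S₂ * R₂ = (x : ℚ) ^ 2 - (z : ℚ) ^ 2 + R₁ ^ 2 + R₂ ^ 2 - 2 * S₁ * R₁ := by
    rw [hS₂]; field_simp
  have hS₂₃ : S₂ ^ 2 + S₃ ^ 2 = (2 * c / u) ^ 2 := by
    rw [hS₃]
    exact sq_add_sq_eq_of_cayleyMenger hd0 (by rw [hR₂]; field_simp) hv2 hw2 hx2 hy2 hS₂R₂ hvol
  intro p hp hdvd
  by_contra hp4
  have := Fact.mk hp
  have hp1 : ¬p ∣ 1 := hp.not_dvd_one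
  obtain ⟨hR₁p, hR₂p⟩ := Rat.not_dvd_den_of_not_dvd_den_sq_add_sq hp4 (a := R₁) (b := R₂)
    (by rw [← hv2]; simpa [Rat.den_pow] using hp1)
  obtain ⟨hS₁p, hTp⟩ := Rat.not_dvd_den_of_not_dvd_den_sq_add_sq hp4 (a := S₁) (b := 2 * c / u)
    (by rw [← hx2]; simpa [Rat.den_pow] using hp1)
  obtain ⟨hS₂p, hS₃p⟩ := Rat.not_dvd_den_of_not_dvd_den_sq_add_sq hp4 (a := S₂) (b := S₃)
    (by rw [hS₂₃, Rat.den_pow]; exact mt hp.dvd_of_dvd_pow hTp)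
  simp only [Int.natCast_dvd_natCast] at hdvd
  tauto

/-- The denominators of the coordinate components of a Heronian tetrahedron in
axial pose are products of primes congruent to `1` modulo `4`. -/
theorem heronian_axial_pose_denominators (u v w x y z : ℤ)
    (hu : 0 < u) (hv : 0 < v) (hw : 0 < w) (hx : 0 < x) (hy : 0 < y) (hz : 0 < z)
    (d : ℚ) (hd0 : d ≠ 0) (hd : 0 ≤ d)
    (heron_d : (4 * d) ^ 2 =
      ((u : ℚ) + v + w) * ((u : ℚ) + v - w) * ((u : ℚ) - v + w) * (-(u : ℚ) + v + w))
    (c : ℚ) (hc : 0 ≤ c)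
    (heron_c : (4 * c) ^ 2 =
      ((u : ℚ) + x + y) * ((u : ℚ) + x - y) * ((u : ℚ) - x + y) * (-(u : ℚ) + x + y))
    (e : ℚ) (he : e ≠ 0)
    (hvol : 288 * e ^ 2 = Matrix.det
      !![0, 1, 1, 1, 1;
         1, 0, (u : ℚ) ^ 2, (v : ℚ) ^ 2, (x : ℚ) ^ 2;
         1, (u : ℚ) ^ 2, 0, (w : ℚ) ^ 2, (y : ℚ) ^ 2;
         1, (v : ℚ) ^ 2, (w : ℚ) ^ 2, 0, (z : ℚ) ^ 2;
         1, (x : ℚ) ^ 2, (y : ℚ) ^ 2, (z : ℚ) ^ 2, 0])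
    (R₁ R₂ S₁ S₂ S₃ : ℚ)
    (hR₁ : R₁ = ((v : ℚ) ^ 2 - (w : ℚ) ^ 2 + (u : ℚ) ^ 2) / (2 * u))
    (hR₂ : R₂ = 2 * d / u)
    (hS₁ : S₁ = ((x : ℚ) ^ 2 - (y : ℚ) ^ 2 + (u : ℚ) ^ 2) / (2 * u))
    (hS₂ : S₂ = ((x : ℚ) ^ 2 - (z : ℚ) ^ 2 + R₁ ^ 2 + R₂ ^ 2 - 2 * S₁ * R₁) / (2 * R₂))
    (hS₃ : S₃ = 3 * e / d) :
    ∀ p : ℕ, Nat.Prime p →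
      ((p : ℤ) ∣ R₁.den ∨ (p : ℤ) ∣ R₂.den ∨ (p : ℤ) ∣ S₁.den ∨
        (p : ℤ) ∣ S₂.den ∨ (p : ℤ) ∣ S₃.den) →
      p % 4 = 1 :=
  heronian_axial_pose_denominators_general u v w x y z hu d hd0 heron_d c heron_c e hvol R₁ R₂ S₁ S₂
    S₃ hR₁ hR₂ hS₁ hS₂ hS₃
end

section
/- There exist points P, Q, R, S, T : Fin 4 → ℚ with squared distances ∑(Q−P)² = 1, ∑(R−P)² = 2, ∑(R−Q)² = 3, ∑(S−P)² = 2, ∑(S−Q)² = 3, ∑(S−R)² = 2, ∑(T−P)² = 1, ∑(T−Q)² = 2, ∑(T−R)² = 1, ∑(T−S)² = 1, and such that the 4×4 matrix with rows Q−P, R−P, S−P, T−P has nonzero determinant. -/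
/-- The pentatope with the listed squared edge-lengths can be rationally posed
in `ℚ⁴`, and it is proper (nonzero 4-dimensional content). -/
theorem pentatope_rational_pose :
    ∃ P Q R S T : Fin 4 → ℚ,
      (∑ k, (Q k - P k) ^ 2 = 1) ∧
      (∑ k, (R k - P k) ^ 2 = 2) ∧
      (∑ k, (R k - Q k) ^ 2 = 3) ∧
      (∑ k, (S k - P k) ^ 2 = 2) ∧
      (∑ k, (S k - Q k) ^ 2 = 3) ∧
      (∑ k, (S k - R k) ^ 2 = 2) ∧
      (∑ k, (T k - P k) ^ 2 = 1) ∧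
      (∑ k, (T k - Q k) ^ 2 = 2) ∧
      (∑ k, (T k - R k) ^ 2 = 1) ∧
      (∑ k, (T k - S k) ^ 2 = 1) ∧
      Matrix.det (Matrix.of ![Q - P, R - P, S - P, T - P]) ≠ 0 := by
  refine ⟨![0,0,0,0], ![1,0,0,0], ![0,1,1,0], ![0,1,0,1], ![0,1/3,2/3,2/3], ?_, ?_, ?_, ?_, ?_, ?_, ?_, ?_, ?_, ?_, ?_⟩ <;>
    simp [Fin.sum_univ_four, Matrix.det_succ_row_zero, Fin.sum_univ_succ, Matrix.sub_apply] <;> norm_num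
end

section
/- Let r be an odd positive integer and let x, y ∈ ℤ with gcd(gcd(x, y), r) = 1. Then there exist f, g ∈ ℤ such that the Lipschitz quaternion X = f + g·k is a greatest common left divisor of A = r + x·i + y·j and r in Quaternion ℤ: X left-divides A and X left-divides (r : Quaternion ℤ), and every W ∈ Quaternion ℤ which left-divides both A and (r : Quaternion ℤ) also left-divides X. (X left-divides B means ∃ U ∈ Quaternion ℤ, B = X * U.) -/
/-!
Send the Gaussian integer `a + b·i` to the quaternion `a + b·k`; this is a ring embedding
`φ` because `k² = -1`. Then `r + x·i + y·j = φ r + φ (x + y·i) · i`, and as the quaternion `i`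
is a unit, the common left divisors of `φ r + φ w · i` and `φ r` are those of `φ w` and `φ r`.
A Bézout identity for the Gaussian gcd `d` of `w` and `r` shows that `φ d = d.re + d.im·k` is a
greatest common left divisor of `φ w` and `φ r`.
-/

open scoped Quaternion

/-- In a noncommutative monoid `d ∣ a` means `a = d * c` for some `c`: left divisibility. -/
def IsLeftGCD {H : Type*} [Monoid H] (d a b : H) : Prop :=
  d ∣ a ∧ d ∣ b ∧ ∀ w, w ∣ a → w ∣ b → w ∣ d

theorem isLeftGCD_map_gcd {R H : Type*} [EuclideanDomain R] [DecidableEq R] [Ring H]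
    (φ : R →+* H) (a b : R) : IsLeftGCD (φ (EuclideanDomain.gcd a b)) (φ a) (φ b) := by
  refine ⟨map_dvd φ (EuclideanDomain.gcd_dvd_left a b),
    map_dvd φ (EuclideanDomain.gcd_dvd_right a b), fun w hwa hwb => ?_⟩
  rw [EuclideanDomain.gcd_eq_gcd_ab, map_add, map_mul, map_mul]
  exact dvd_add (hwa.mul_right _) (hwb.mul_right _)

theorem IsLeftGCD.add_mul_of_isUnit {H : Type*} [Ring H] {d a b u : H} (hu : IsUnit u)
    (h : IsLeftGCD d a b) : IsLeftGCD d (b + a * u) b := by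
  obtain ⟨hda, hdb, hgreatest⟩ := h
  refine ⟨dvd_add hdb (hda.mul_right u), hdb, fun w hw hwb => hgreatest w ?_ hwb⟩
  rw [← hu.dvd_mul_right]
  simpa using dvd_sub hw hwb

def Quaternion.i (R : Type*) [CommRing R] : ℍ[R] := ⟨0, 1, 0, 0⟩

theorem Quaternion.i_mul_i (R : Type*) [CommRing R] : i R * i R = -1 := by
  change (⟨0, 1, 0, 0⟩ : ℍ[R]) * ⟨0, 1, 0, 0⟩ = -1
  ext <;> simp

theorem Quaternion.isUnit_i (R : Type*) [CommRing R] : IsUnit (i R) :=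
  ⟨⟨i R, -i R, by simp [i_mul_i], by simp [i_mul_i]⟩, rfl⟩

def GaussianInt.toQuaternion : GaussianInt →+* ℍ[ℤ] where
  toFun z := ⟨z.re, 0, 0, z.im⟩
  map_one' := rfl
  map_mul' z w := by
    change (⟨(z * w).re, 0, 0, (z * w).im⟩ : ℍ[ℤ]) = ⟨z.re, 0, 0, z.im⟩ * ⟨w.re, 0, 0, w.im⟩
    ext <;> simp; ring
  map_zero' := rfl
  map_add' z w := by
    change (⟨(z + w).re, 0, 0, (z + w).im⟩ : ℍ[ℤ]) = ⟨z.re, 0, 0, z.im⟩ + ⟨w.re, 0, 0, w.im⟩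
    ext <;> simp

theorem GaussianInt.toQuaternion_apply (z : GaussianInt) :
    toQuaternion z = ⟨z.re, 0, 0, z.im⟩ :=
  rfl

theorem Quaternion.mk_eq_toQuaternion_add_toQuaternion_mul_i (r x y : ℤ) :
    (⟨r, x, y, 0⟩ : ℍ[ℤ]) =
      GaussianInt.toQuaternion r + GaussianInt.toQuaternion ⟨x, y⟩ * i ℤ := by
  change (⟨r, x, y, 0⟩ : ℍ[ℤ]) = ⟨r, 0, 0, 0⟩ + ⟨x, 0, 0, y⟩ * ⟨0, 1, 0, 0⟩
  ext <;> simp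

theorem planar_quaternion_gcd_general (r : ℤ) (x y : ℤ) :
    ∃ f g : ℤ, ∃ X A : Quaternion ℤ,
      X = (⟨f, 0, 0, g⟩ : Quaternion ℤ) ∧ A = (⟨r, x, y, 0⟩ : Quaternion ℤ) ∧
      (∃ U : Quaternion ℤ, A = X * U) ∧
      (∃ U : Quaternion ℤ, ((r : ℤ) : Quaternion ℤ) = X * U) ∧
      (∀ W : Quaternion ℤ,
        (∃ U : Quaternion ℤ, A = W * U) →
        (∃ U : Quaternion ℤ, ((r : ℤ) : Quaternion ℤ) = W * U) →
        ∃ U : Quaternion ℤ, X = W * U) := by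
  set d := EuclideanDomain.gcd (⟨x, y⟩ : GaussianInt) r
  have hgcd : IsLeftGCD (GaussianInt.toQuaternion d) ⟨r, x, y, 0⟩ r := by
    rw [Quaternion.mk_eq_toQuaternion_add_toQuaternion_mul_i,
      ← map_intCast GaussianInt.toQuaternion r]
    exact (isLeftGCD_map_gcd _ _ _).add_mul_of_isUnit (Quaternion.isUnit_i ℤ)
  exact ⟨d.re, d.im, _, _, GaussianInt.toQuaternion_apply d, rfl, hgcd⟩

/-- Embedding in `ℤ²` is a special case of embedding in `ℤ³`: the quaternion left
GCD of `r + x·i + y·j` and `r` may be taken of the form `f + g·k`. -/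
theorem planar_quaternion_gcd (r : ℤ) (hr : 0 < r) (hodd : Odd r) (x y : ℤ)
    (hprim : Int.gcd (Int.gcd x y) r = 1) :
    ∃ f g : ℤ, ∃ X A : Quaternion ℤ,
      X = (⟨f, 0, 0, g⟩ : Quaternion ℤ) ∧ A = (⟨r, x, y, 0⟩ : Quaternion ℤ) ∧
      (∃ U : Quaternion ℤ, A = X * U) ∧
      (∃ U : Quaternion ℤ, ((r : ℤ) : Quaternion ℤ) = X * U) ∧
      (∀ W : Quaternion ℤ,
        (∃ U : Quaternion ℤ, A = W * U) →
        (∃ U : Quaternion ℤ, ((r : ℤ) : Quaternion ℤ) = W * U) →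
        ∃ U : Quaternion ℤ, X = W * U) :=
  planar_quaternion_gcd_general r x y
end
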